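/- arXiv:2407.13034 — 6 statements merged into one kernel-verified Lean document; each statement's English description precedes it below -/
import Mathlib

section
/- For any real constant a ≠ 0, the function u(x) = (a² - |x|²)/(a² + |x|²) is a classical solution of -Δu = (2/|x|²)·u·(1 - u²) on ℝ²\{0}. -/
noncomputable def lap (u : ℝ × ℝ → ℝ) (p : ℝ × ℝ) : ℝ :=
  iteratedDeriv 2 (fun s => u (s, p.2)) p.1 + iteratedDeriv 2 (fun s => u (p.1, s)) p.2

lemma aux_pos (a : ℝ) (ha : a ≠ 0) (c s : ℝ) (hc : 0 ≤ c) : 0 < a ^ 2 + (s ^ 2 + c) := by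
  positivity

lemma aux_hd1 (a : ℝ) (ha : a ≠ 0) (c : ℝ) (hc : 0 ≤ c) (s : ℝ) :
    HasDerivAt (fun s => (a ^ 2 - (s ^ 2 + c)) / (a ^ 2 + (s ^ 2 + c)))
      (-4 * a ^ 2 * s / (a ^ 2 + (s ^ 2 + c)) ^ 2) s := by
  have hD := aux_pos a ha c s hc
  have h1 : HasDerivAt (fun s : ℝ => a ^ 2 - (s ^ 2 + c)) (-(2 * s)) s := by
    simpa using ((hasDerivAt_pow 2 s).add_const c).const_sub (a ^ 2)
  have h2 : HasDerivAt (fun s : ℝ => a ^ 2 + (s ^ 2 + c)) (2 * s) s := by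
    simpa using ((hasDerivAt_pow 2 s).add_const c).const_add (a ^ 2)
  have := h1.div h2 hD.ne'
  refine this.congr_deriv ?_
  rw [div_eq_div_iff (pow_ne_zero _ hD.ne') (pow_ne_zero _ hD.ne')]
  ring

lemma aux_hd2 (a : ℝ) (ha : a ≠ 0) (c : ℝ) (hc : 0 ≤ c) (s : ℝ) :
    HasDerivAt (fun s => -4 * a ^ 2 * s / (a ^ 2 + (s ^ 2 + c)) ^ 2)
      ((-4 * a ^ 2 * (a ^ 2 + c) + 12 * a ^ 2 * s ^ 2) / (a ^ 2 + (s ^ 2 + c)) ^ 3) s := by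
  have hD := aux_pos a ha c s hc
  have h1 : HasDerivAt (fun s : ℝ => -4 * a ^ 2 * s) (-4 * a ^ 2) s := by
    have := (hasDerivAt_id s).const_mul (-4 * a ^ 2)
    simp only [mul_one] at this
    exact this
  have h2 : HasDerivAt (fun s : ℝ => a ^ 2 + (s ^ 2 + c)) (2 * s) s := by
    simpa using ((hasDerivAt_pow 2 s).add_const c).const_add (a ^ 2)
  have h3 := h2.pow 2
  have h4 := h1.div h3 (by positivity : (0:ℝ) < (a ^ 2 + (s ^ 2 + c)) ^ 2).ne'
  refine h4.congr_deriv ?_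
  simp only [Pi.pow_apply]
  rw [div_eq_div_iff (pow_ne_zero _ (pow_ne_zero _ hD.ne')) (pow_ne_zero _ hD.ne'), show (2:ℕ) - 1 = 1 from rfl]
  push_cast
  ring

lemma aux_second (a : ℝ) (ha : a ≠ 0) (c : ℝ) (hc : 0 ≤ c) (t : ℝ) :
    iteratedDeriv 2 (fun s => (a ^ 2 - (s ^ 2 + c)) / (a ^ 2 + (s ^ 2 + c))) t
      = (-4 * a ^ 2 * (a ^ 2 + c) + 12 * a ^ 2 * t ^ 2) / (a ^ 2 + (t ^ 2 + c)) ^ 3 := by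
  rw [iteratedDeriv_succ, iteratedDeriv_one]
  have hderiv : deriv (fun s => (a ^ 2 - (s ^ 2 + c)) / (a ^ 2 + (s ^ 2 + c)))
      = fun s => -4 * a ^ 2 * s / (a ^ 2 + (s ^ 2 + c)) ^ 2 := by
    funext s
    exact (aux_hd1 a ha c hc s).deriv
  rw [hderiv]
  exact (aux_hd2 a ha c hc t).deriv

theorem stmt0 (a : ℝ) (ha : a ≠ 0) :
    ContDiffOn ℝ 2 (fun x : ℝ × ℝ => (a ^ 2 - (x.1 ^ 2 + x.2 ^ 2)) / (a ^ 2 + (x.1 ^ 2 + x.2 ^ 2)))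
      {x : ℝ × ℝ | x ≠ 0} ∧
    ∀ x : ℝ × ℝ, x ≠ 0 →
      -lap (fun x : ℝ × ℝ => (a ^ 2 - (x.1 ^ 2 + x.2 ^ 2)) / (a ^ 2 + (x.1 ^ 2 + x.2 ^ 2))) x
        = (2 / (x.1 ^ 2 + x.2 ^ 2)) *
            ((a ^ 2 - (x.1 ^ 2 + x.2 ^ 2)) / (a ^ 2 + (x.1 ^ 2 + x.2 ^ 2))) *
            (1 - ((a ^ 2 - (x.1 ^ 2 + x.2 ^ 2)) / (a ^ 2 + (x.1 ^ 2 + x.2 ^ 2))) ^ 2) := by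
  constructor
  · apply ContDiff.contDiffOn
    apply ContDiff.div
    · exact contDiff_const.sub ((contDiff_fst.pow 2).add (contDiff_snd.pow 2))
    · exact contDiff_const.add ((contDiff_fst.pow 2).add (contDiff_snd.pow 2))
    · intro x
      have : 0 < a ^ 2 + (x.1 ^ 2 + x.2 ^ 2) := by positivity
      exact this.ne'
  · intro x hx
    have hr : x.1 ^ 2 + x.2 ^ 2 ≠ 0 := by
      intro h
      have h1 : x.1 = 0 := by nlinarith [sq_nonneg x.1, sq_nonneg x.2]
      have h2 : x.2 = 0 := by nlinarith [sq_nonneg x.1, sq_nonneg x.2]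
      exact hx (Prod.ext h1 h2)
    have hD : (0:ℝ) < a ^ 2 + (x.1 ^ 2 + x.2 ^ 2) := by positivity
    unfold lap
    have e1 : iteratedDeriv 2
        (fun s => (a ^ 2 - (s ^ 2 + x.2 ^ 2)) / (a ^ 2 + (s ^ 2 + x.2 ^ 2))) x.1
        = (-4 * a ^ 2 * (a ^ 2 + x.2 ^ 2) + 12 * a ^ 2 * x.1 ^ 2)
          / (a ^ 2 + (x.1 ^ 2 + x.2 ^ 2)) ^ 3 :=
      aux_second a ha (x.2 ^ 2) (sq_nonneg _) x.1
    have e2 : iteratedDeriv 2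
        (fun s => (a ^ 2 - (x.1 ^ 2 + s ^ 2)) / (a ^ 2 + (x.1 ^ 2 + s ^ 2))) x.2
        = (-4 * a ^ 2 * (a ^ 2 + x.1 ^ 2) + 12 * a ^ 2 * x.2 ^ 2)
          / (a ^ 2 + (x.1 ^ 2 + x.2 ^ 2)) ^ 3 := by
      have hfun : (fun s : ℝ => (a ^ 2 - (x.1 ^ 2 + s ^ 2)) / (a ^ 2 + (x.1 ^ 2 + s ^ 2)))
          = fun s => (a ^ 2 - (s ^ 2 + x.1 ^ 2)) / (a ^ 2 + (s ^ 2 + x.1 ^ 2)) := by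
        funext s; ring_nf
      rw [hfun]
      have := aux_second a ha (x.1 ^ 2) (sq_nonneg _) x.2
      rw [this]
      ring_nf
    simp only [e1, e2]
    field_simp
    ring
end

section
/- Let v ∈ C²(ℝ) solve -v'' = 2v(1 - v²) on ℝ, and let c be the constant with (v')² = (v² - 1)² + c on ℝ (the first integral). Then -1 ≤ c ≤ 0. -/
open Set

private lemma grow (f : ℝ → ℝ) (hf : Differentiable ℝ f) (m T : ℝ)
    (h : ∀ t, T < t → m ≤ deriv f t) :
    ∀ t, T ≤ t → m * (t - T) ≤ f t - f T := by
  intro t ht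
  exact (convex_Ici T).mul_sub_le_image_sub_of_le_deriv
    hf.continuous.continuousOn
    (fun x _ => (hf x).differentiableWithinAt)
    (fun x hx => h x (by simpa [interior_Ici] using hx))
    T self_mem_Ici t (mem_Ici.mpr ht) ht

private lemma blowup (u : ℝ → ℝ) (hu : Differentiable ℝ u) (T : ℝ)
    (h2 : 2 ≤ u T) (h : ∀ t, T ≤ t → (u t) ^ 2 / 4 ≤ deriv u t) : False := by
  have mono : ∀ t, T ≤ t → u T ≤ u t := by
    intro t ht
    have := grow u hu 0 T (fun s hs => le_trans (by positivity) (h s hs.le)) t ht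
    linarith
  have hge : ∀ t, T ≤ t → 2 ≤ u t := fun t ht => le_trans h2 (mono t ht)
  have hne : ∀ t, T ≤ t → u t ≠ 0 := fun t ht => by have := hge t ht; intro h0; rw [h0] at this; norm_num at this
  have hgd : ∀ t, T ≤ t → HasDerivAt (fun s => -(u s)⁻¹) (deriv u t / (u t) ^ 2) t := by
    intro t ht
    have h0 := hne t ht
    have := ((hu t).hasDerivAt.inv h0).neg
    rw [neg_div, neg_neg] at this
    exact this
  have key := (convex_Ici T).mul_sub_le_image_sub_of_le_deriv
    (f := fun s => -(u s)⁻¹) (C := 1/4)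
    ((hu.continuous.continuousOn.inv₀ (fun x hx => hne x hx)).neg)
    (fun x hx => (hgd x (le_of_lt (by simpa [interior_Ici] using hx))).differentiableAt.differentiableWithinAt)
    (fun x hx => by
      have hx' : T < x := by simpa [interior_Ici] using hx
      rw [(hgd x hx'.le).deriv]
      have h4 := h x hx'.le
      have hu2 := hge x hx'.le
      rw [le_div_iff₀ (by positivity)]
      nlinarith)
    T self_mem_Ici (T + 2) (mem_Ici.mpr (by linarith)) (by linarith)
  have i1 : (u T)⁻¹ ≤ 1/2 := by
    rw [show (1:ℝ)/2 = 2⁻¹ by norm_num]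
    exact inv_anti₀ (by norm_num) h2
  have i2 : 0 < (u (T + 2))⁻¹ := by
    have := hge (T + 2) (by linarith)
    positivity
  linarith

private lemma escape (u : ℝ → ℝ) (hu : Differentiable ℝ u) (c : ℝ)
    (hfi : ∀ t, (deriv u t) ^ 2 = ((u t) ^ 2 - 1) ^ 2 + c)
    (T M : ℝ) (hM : 2 ≤ M) (hM2 : -c ≤ 3/4 * (M ^ 2 - 1) ^ 2)
    (hMT : M ≤ u T) (hpos : ∀ t, T ≤ t → 0 < deriv u t) : False := by
  have mono : ∀ t, T ≤ t → u T ≤ u t := by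
    intro t ht
    have := grow u hu 0 T (fun s hs => (hpos s hs.le).le) t ht
    linarith
  apply blowup u hu T (by linarith [mono T le_rfl])
  intro t ht
  have h1 : M ≤ u t := le_trans hMT (mono t ht)
  have ha : 2 ≤ u t := le_trans hM h1
  have h2 := hfi t
  have h3 := hpos t ht
  have hM2a : M ^ 2 ≤ (u t) ^ 2 := by nlinarith
  have hq : (M ^ 2 - 1) ^ 2 ≤ ((u t) ^ 2 - 1) ^ 2 := by
    nlinarith [mul_nonneg (sub_nonneg.mpr hM2a) (by nlinarith : (0:ℝ) ≤ (u t) ^ 2 + M ^ 2 - 2)]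
  have hx4 : 4 ≤ (u t) ^ 2 := by nlinarith
  have hd2 : ((u t) ^ 2 / 4) ^ 2 ≤ (deriv u t) ^ 2 := by
    nlinarith [mul_nonneg (by linarith : (0:ℝ) ≤ (u t) ^ 2 - 2) (by linarith : (0:ℝ) ≤ 3 * (u t) ^ 2 - 2)]
  nlinarith [sq_nonneg (deriv u t + (u t) ^ 2 / 4), sq_nonneg (u t)]

private lemma branch1 (u : ℝ → ℝ) (hu : Differentiable ℝ u) (c : ℝ)
    (hfi : ∀ t, (deriv u t) ^ 2 = ((u t) ^ 2 - 1) ^ 2 + c) (hc : 0 < c)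
    (hpos : ∀ t, 0 < deriv u t) : False := by
  have hs0 : 0 < Real.sqrt c := Real.sqrt_pos.mpr hc
  have hs2 : Real.sqrt c ^ 2 = c := Real.sq_sqrt hc.le
  have hds : ∀ t, Real.sqrt c ≤ deriv u t := by
    intro t
    have h1 := hfi t
    have h2 := hpos t
    nlinarith [sq_nonneg ((u t) ^ 2 - 1)]
  set T := max 0 ((2 - u 0) / Real.sqrt c) with hT
  have hT0 : (0:ℝ) ≤ T := le_max_left _ _
  have hgrow := grow u hu (Real.sqrt c) 0 (fun t _ => hds t) T hT0
  have huT : 2 ≤ u T := by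
    have h1 : (2 - u 0) / Real.sqrt c ≤ T := le_max_right _ _
    have h2 : 2 - u 0 ≤ Real.sqrt c * T := by
      rw [div_le_iff₀ hs0] at h1
      linarith
    linarith
  exact escape u hu c hfi T 2 le_rfl (by norm_num; linarith) huT (fun t _ => hpos t)

private lemma branch2 (u : ℝ → ℝ) (hu : Differentiable ℝ u)
    (hu2 : Differentiable ℝ (deriv u)) (c : ℝ)
    (hfi : ∀ t, (deriv u t) ^ 2 = ((u t) ^ 2 - 1) ^ 2 + c)
    (hode : ∀ t, deriv (deriv u) t = 2 * u t * ((u t) ^ 2 - 1))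
    (hc : c < -1) (hub : ∀ t, 1 ≤ u t) : False := by
  have hgt : ∀ t, 1 < (u t) ^ 2 - 1 := by
    intro t
    have h1 := hfi t
    have h2 := hub t
    nlinarith [sq_nonneg (deriv u t), sq_nonneg (u t - 1)]
  have hdd : ∀ t, 2 ≤ deriv (deriv u) t := by
    intro t
    rw [hode t]
    nlinarith [hub t, hgt t]
  set T0 := max 0 ((1 - deriv u 0) / 2) with hT0
  have h1T0 : 1 ≤ deriv u T0 := by
    have hg := grow (deriv u) hu2 2 0 (fun t _ => hdd t) T0 (le_max_left _ _)
    have h1 : (1 - deriv u 0) / 2 ≤ T0 := le_max_right _ _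
    have h2 : 1 - deriv u 0 ≤ 2 * T0 := by
      rw [div_le_iff₀ (by norm_num : (0:ℝ) < 2)] at h1
      linarith
    linarith
  have hd1 : ∀ t, T0 ≤ t → 1 ≤ deriv u t := by
    intro t ht
    have := grow (deriv u) hu2 0 T0 (fun s _ => by linarith [hdd s]) t ht
    linarith
  have hs2 : Real.sqrt (-c) ^ 2 = -c := Real.sq_sqrt (by linarith)
  have hs0 : 0 ≤ Real.sqrt (-c) := Real.sqrt_nonneg _
  set M := 2 + 2 * Real.sqrt (-c) with hM
  set T := T0 + max 0 (M - u T0) with hT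
  have hTT0 : T0 ≤ T := by
    have := le_max_left 0 (M - u T0)
    linarith
  have huT : M ≤ u T := by
    have hg := grow u hu 1 T0 (fun t ht => hd1 t ht.le) T hTT0
    have := le_max_right 0 (M - u T0)
    linarith
  refine escape u hu c hfi T M (by rw [hM]; linarith) ?_ huT
    (fun t ht => lt_of_lt_of_le zero_lt_one (hd1 t (le_trans hTT0 ht)))
  rw [hM]
  nlinarith [hs0, hs2, sq_nonneg (Real.sqrt (-c)), mul_nonneg hs0 (sq_nonneg (Real.sqrt (-c))), sq_nonneg (Real.sqrt (-c) ^ 2)]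

private lemma keyIVT (f : ℝ → ℝ) (hf : Continuous f) (hne : ∀ t, f t ≠ 0)
    (h0 : 0 < f 0) : ∀ t, 0 < f t := by
  intro t
  rcases lt_or_ge 0 (f t) with h | h
  · exact h
  have hlt : f t < 0 := lt_of_le_of_ne h (hne t)
  rcases le_total 0 t with ht | ht
  · have : (0:ℝ) ∈ Icc (f t) (f 0) := ⟨hlt.le, h0.le⟩
    obtain ⟨x, _, hx⟩ := intermediate_value_Icc' ht hf.continuousOn this
    exact absurd hx (hne x)
  · have : (0:ℝ) ∈ Icc (f t) (f 0) := ⟨hlt.le, h0.le⟩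
    obtain ⟨x, _, hx⟩ := intermediate_value_Icc ht hf.continuousOn this
    exact absurd hx (hne x)

theorem stmt5 (v : ℝ → ℝ) (hreg : ContDiff ℝ 2 v)
    (hode : ∀ t : ℝ, -(deriv (deriv v) t) = 2 * v t * (1 - (v t) ^ 2))
    (c : ℝ) (hc : ∀ t : ℝ, (deriv v t) ^ 2 = ((v t) ^ 2 - 1) ^ 2 + c) :
    -1 ≤ c ∧ c ≤ 0 := by
  have hv1 : Differentiable ℝ v := hreg.differentiable (by norm_num)
  have hv2cd : ContDiff ℝ 1 (deriv v) :=
    (contDiff_succ_iff_deriv.mp (show ContDiff ℝ (1 + 1) v by exact_mod_cast hreg)).2.2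
  have hv2 : Differentiable ℝ (deriv v) := hv2cd.differentiable (by norm_num)
  constructor
  · -- -1 ≤ c
    by_contra hcon
    push_neg at hcon
    have hgt2 : ∀ t, 2 < (v t) ^ 2 := by
      intro t
      have h1 := hc t
      nlinarith [sq_nonneg (deriv v t), sq_nonneg (v t)]
    have hvne : ∀ t, v t ≠ 0 := by
      intro t h
      have := hgt2 t
      rw [h] at this
      norm_num at this
    have e1 : deriv (fun s => -v s) = fun s => -(deriv v s) := funext fun s => deriv.neg
    rcases lt_or_ge 0 (v 0) with h0 | h0
    · have hall : ∀ t, 0 < v t := keyIVT v hreg.continuous hvne h0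
      have hub : ∀ t, 1 ≤ v t := by
        intro t
        nlinarith [hall t, hgt2 t]
      have hode2 : ∀ t, deriv (deriv v) t = 2 * v t * ((v t) ^ 2 - 1) := by
        intro t
        linear_combination (-1 : ℝ) * hode t
      exact branch2 v hv1 hv2 c hc hode2 hcon hub
    · have h0' : 0 < -v 0 := by
        rcases lt_or_eq_of_le h0 with h | h
        · linarith
        · exact absurd h (hvne 0)
      have hall : ∀ t, 0 < -v t :=
        keyIVT (fun t => -v t) hreg.continuous.neg (fun t => neg_ne_zero.mpr (hvne t)) h0'
      have hub : ∀ t, 1 ≤ -v t := by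
        intro t
        nlinarith [hall t, hgt2 t]
      have hfi' : ∀ t, (deriv (fun s => -v s) t) ^ 2 = (((fun s => -v s) t) ^ 2 - 1) ^ 2 + c := by
        intro t
        rw [e1]
        simp only
        linear_combination hc t
      have hode' : ∀ t, deriv (deriv (fun s => -v s)) t
          = 2 * ((fun s => -v s) t) * (((fun s => -v s) t) ^ 2 - 1) := by
        intro t
        rw [e1]
        rw [show deriv (fun s => -(deriv v s)) t = -(deriv (deriv v) t) from deriv.neg]
        simp only
        linear_combination hode t
      have hu2 : Differentiable ℝ (deriv (fun s => -v s)) := by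
        rw [e1]
        exact hv2.neg
      exact branch2 (fun s => -v s) hv1.neg hu2 c hfi' hode' hcon hub
  · -- c ≤ 0
    by_contra hcon
    push_neg at hcon
    have hne : ∀ t, deriv v t ≠ 0 := by
      intro t h0
      have h1 := hc t
      rw [h0] at h1
      nlinarith [sq_nonneg ((v t) ^ 2 - 1)]
    have e1 : deriv (fun s => -v s) = fun s => -(deriv v s) := funext fun s => deriv.neg
    rcases lt_or_ge 0 (deriv v 0) with h0 | h0
    · have hall : ∀ t, 0 < deriv v t := keyIVT (deriv v) hv2.continuous hne h0
      exact branch1 v hv1 c hc hcon hall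
    · have h0' : 0 < -deriv v 0 := by
        rcases lt_or_eq_of_le h0 with h | h
        · linarith
        · exact absurd h (hne 0)
      have hall : ∀ t, 0 < -deriv v t :=
        keyIVT (fun t => -deriv v t) hv2.continuous.neg (fun t => neg_ne_zero.mpr (hne t)) h0'
      have hfi' : ∀ t, (deriv (fun s => -v s) t) ^ 2 = (((fun s => -v s) t) ^ 2 - 1) ^ 2 + c := by
        intro t
        rw [e1]
        simp only
        linear_combination hc t
      have hpos' : ∀ t, 0 < deriv (fun s => -v s) t := by
        intro t
        rw [e1]
        exact hall t
      exact branch1 (fun s => -v s) hv1.neg c hfi' hcon hpos'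
end

section
/- Let v ∈ C²(ℝ) solve -v'' = 2v(1 - v²) on ℝ with first integral constant c = 0, i.e., (v'(t))² = (v(t)² - 1)² for all t. Then either v ≡ 0, v ≡ 1, v ≡ -1, or there exists a > 0 such that v(t) = ±(a² - e^{2t})/(a² + e^{2t}) for all t ∈ ℝ. -/
open Set

lemma gronwall_zero (f f' : ℝ → ℝ) (K a b : ℝ)
    (hf : ∀ t, HasDerivAt f (f' t) t) (h0 : f a = 0)
    (hb : ∀ t ∈ Set.Icc a b, |f' t| ≤ K * |f t|) : ∀ t ∈ Set.Icc a b, f t = 0 := by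
  intro t ht
  have h := norm_le_gronwallBound_of_norm_deriv_right_le (f := f) (f' := f') (δ := 0) (K := K)
    (ε := 0) (a := a) (b := b)
    (fun x _ => (hf x).continuousAt.continuousWithinAt)
    (fun x _ => (hf x).hasDerivWithinAt)
    (by simp [h0]) (fun x hx => by simpa using hb x (Ico_subset_Icc_self hx)) t ht
  rw [gronwallBound_ε0_δ0] at h
  exact abs_eq_zero.mp (le_antisymm h (abs_nonneg _))

lemma gronwall_zero_global (f f' C : ℝ → ℝ) (t₀ : ℝ)
    (hf : ∀ t, HasDerivAt f (f' t) t) (h0 : f t₀ = 0) (hC : Continuous C)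
    (hb : ∀ t, |f' t| ≤ C t * |f t|) : ∀ t, f t = 0 := by
  intro t
  rcases le_or_gt t₀ t with h | h
  · obtain ⟨K, hK⟩ : ∃ K, ∀ x ∈ Set.Icc t₀ t, C x ≤ K := by
      obtain ⟨K, hK⟩ := (isCompact_Icc (a := t₀) (b := t)).bddAbove_image
        (hC.continuousOn (s := Set.Icc t₀ t))
      exact ⟨K, fun x hx => hK ⟨x, hx, rfl⟩⟩
    exact gronwall_zero f f' K t₀ t hf h0
      (fun x hx => le_trans (hb x) (mul_le_mul_of_nonneg_right (hK x hx) (abs_nonneg _)))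
      t ⟨h, le_refl t⟩
  · -- backward: g x = f (2t₀ - x)
    set g : ℝ → ℝ := fun x => f (2 * t₀ - x) with hg
    have hg' : ∀ x, HasDerivAt g (-(f' (2 * t₀ - x))) x := by
      intro x
      have := (hf (2 * t₀ - x)).comp x (((hasDerivAt_const x (2*t₀)).sub (hasDerivAt_id x)))
      exact this.congr_deriv (by ring)
    have hCc : Continuous fun x : ℝ => C (2 * t₀ - x) := hC.comp (by fun_prop)
    obtain ⟨K, hK⟩ : ∃ K, ∀ x ∈ Set.Icc t₀ (2 * t₀ - t), C (2 * t₀ - x) ≤ K := by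
      obtain ⟨K, hK⟩ := (isCompact_Icc (a := t₀) (b := 2 * t₀ - t)).bddAbove_image
        (hCc.continuousOn (s := Set.Icc t₀ (2 * t₀ - t)))
      exact ⟨K, fun x hx => hK ⟨x, hx, rfl⟩⟩
    have := gronwall_zero g (fun x => -(f' (2 * t₀ - x))) K t₀ (2 * t₀ - t) hg'
      (by show f (2 * t₀ - t₀) = 0; rw [show 2 * t₀ - t₀ = t₀ by ring]; exact h0)
      (by intro x hx
          simpa using le_trans (hb (2 * t₀ - x))
            (mul_le_mul_of_nonneg_right (hK x hx) (abs_nonneg _)))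
      (2 * t₀ - t) ⟨by linarith, le_refl _⟩
    simpa [hg] using this

section
variable (v : ℝ → ℝ)

include v in
lemma absderiv (hc : ∀ t : ℝ, (deriv v t) ^ 2 = ((v t) ^ 2 - 1) ^ 2) :
    ∀ t, |deriv v t| = |(v t) ^ 2 - 1| := by
  intro t
  rw [← Real.sqrt_sq_eq_abs, ← Real.sqrt_sq_eq_abs, hc t]

lemma lemA (hreg : ContDiff ℝ 2 v)
    (hc : ∀ t : ℝ, (deriv v t) ^ 2 = ((v t) ^ 2 - 1) ^ 2)
    (t₀ : ℝ) (h1 : (v t₀) ^ 2 = 1) : (∀ t, v t = 1) ∨ (∀ t, v t = -1) := by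
  have hd : Differentiable ℝ v := hreg.differentiable (by norm_num)
  have hw' : ∀ t, HasDerivAt (fun t => (v t) ^ 2 - 1) (2 * v t * deriv v t) t := by
    intro t
    have := ((hd t).hasDerivAt.pow 2).sub_const 1
    simpa using this
  have hbd : ∀ t, |2 * v t * deriv v t| ≤ (2 * |v t|) * |(v t) ^ 2 - 1| := by
    intro t
    have h : |2 * v t * deriv v t| = 2 * |v t| * |(v t) ^ 2 - 1| := by
      rw [abs_mul, abs_mul, abs_two, absderiv v hc t]
    exact le_of_eq h
  have hzero : ∀ t, (v t) ^ 2 - 1 = 0 :=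
    gronwall_zero_global (fun t => (v t) ^ 2 - 1) (fun t => 2 * v t * deriv v t)
      (fun t => 2 * |v t|) t₀ hw' (by simp [h1]) (continuous_const.mul hd.continuous.abs) hbd
  have hpm : ∀ t, v t = 1 ∨ v t = -1 := by
    intro t
    have h := hzero t
    have : (v t - 1) * (v t + 1) = 0 := by nlinarith
    rcases mul_eq_zero.mp this with h | h
    · left; linarith
    · right; linarith
  by_cases hA : ∀ t, v t = 1
  · exact Or.inl hA
  push_neg at hA
  obtain ⟨b, hb⟩ := hA
  have hbneg : v b = -1 := (hpm b).resolve_left hb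
  right
  intro t
  by_contra ht
  have htpos : v t = 1 := (hpm t).resolve_right ht
  have h0 : (0:ℝ) ∈ Set.uIcc (v t) (v b) := by
    rw [htpos, hbneg, Set.mem_uIcc]; norm_num
  obtain ⟨c, _, hc0⟩ := intermediate_value_uIcc (hd.continuous.continuousOn) h0
  have := hpm c
  rw [hc0] at this
  rcases this with h | h <;> norm_num at h
end


-- sign helpers
lemma sqa_pos (x y : ℝ) (h : x ^ 2 = y ^ 2) (hp : 0 < x * y) : x = y := by
  have h2 : (x - y) * (x + y) = 0 := by linear_combination h
  rcases mul_eq_zero.mp h2 with h3 | h3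
  · linarith
  · exfalso; have : x = -y := by linarith
    rw [this] at hp; nlinarith [sq_nonneg y]

lemma sqa_neg (x y : ℝ) (h : x ^ 2 = y ^ 2) (hp : x * y < 0) : x = -y := by
  have h2 : (x - y) * (x + y) = 0 := by linear_combination h
  rcases mul_eq_zero.mp h2 with h3 | h3
  · exfalso; have : x = y := by linarith
    rw [this] at hp; nlinarith [sq_nonneg y]
  · linarith

lemma sign_dichotomy (φ : ℝ → ℝ) (hcont : Continuous φ) (hne : ∀ t, φ t ≠ 0) :
    (∀ t, 0 < φ t) ∨ (∀ t, φ t < 0) := by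
  by_contra h
  push_neg at h
  obtain ⟨⟨a, ha⟩, ⟨b, hb⟩⟩ := h
  have ha' : φ a < 0 := lt_of_le_of_ne ha (hne a)
  have hb' : 0 < φ b := lt_of_le_of_ne hb (Ne.symm (hne b))
  have h0 : (0:ℝ) ∈ Set.uIcc (φ a) (φ b) := by
    rw [Set.mem_uIcc]; left; exact ⟨le_of_lt ha', le_of_lt hb'⟩
  obtain ⟨c, _, hc0⟩ := intermediate_value_uIcc hcont.continuousOn h0
  exact hne c hc0

lemma stay_lt (f : ℝ → ℝ) (hcont : Continuous f) (c : ℝ) (hne : ∀ t, f t ≠ c)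
    (h0 : f 0 < c) : ∀ t, f t < c := by
  intro t
  by_contra h
  push_neg at h
  have h' : c < f t := lt_of_le_of_ne h (Ne.symm (hne t))
  have hc : c ∈ Set.uIcc (f 0) (f t) := by
    rw [Set.mem_uIcc]; left; exact ⟨le_of_lt h0, le_of_lt h'⟩
  obtain ⟨x, _, hx⟩ := intermediate_value_uIcc hcont.continuousOn hc
  exact hne x hx

-- exponential solution of q' = k q
lemma exp_sol (q : ℝ → ℝ) (k : ℝ) (hq : ∀ t, HasDerivAt q (k * q t) t) :
    ∀ t, q t = q 0 * Real.exp (k * t) := by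
  intro t
  have hG : ∀ s, HasDerivAt (fun s => q s * Real.exp (-(k * s))) 0 s := by
    intro s
    have h1 : HasDerivAt (fun s : ℝ => -(k * s)) (-k) s := by
      simpa using ((hasDerivAt_id s).const_mul k).fun_neg
    have h2 : HasDerivAt (fun s : ℝ => Real.exp (-(k * s))) (Real.exp (-(k*s)) * (-k)) s :=
      (Real.hasDerivAt_exp _).comp s h1
    have := (hq s).mul h2
    refine this.congr_deriv ?_
    ring
  have hconst : ∀ s : ℝ, q s * Real.exp (-(k * s)) = q 0 * Real.exp (-(k * 0)) := by
    intro s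
    have hdiff : Differentiable ℝ (fun s => q s * Real.exp (-(k * s))) :=
      fun s => (hG s).differentiableAt
    have hder : ∀ s, deriv (fun s => q s * Real.exp (-(k * s))) s = 0 :=
      fun s => (hG s).deriv
    exact is_const_of_deriv_eq_zero hdiff hder s 0
  have h := hconst t
  simp only [mul_zero, neg_zero, Real.exp_zero, mul_one] at h
  have hexp : Real.exp (-(k * t)) = (Real.exp (k * t))⁻¹ := by
    rw [Real.exp_neg]
  rw [hexp] at h
  field_simp at h
  linarith [h]

lemma blowup_s7 (u : ℝ → ℝ) (hd : Differentiable ℝ u) (ε : ℝ) (hε : ε ^ 2 = 1)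
    (hu : ∀ t, 1 < u t) (hode : ∀ t, deriv u t = ε * ((u t) ^ 2 - 1)) : False := by
  set q : ℝ → ℝ := fun t => (u t - 1) / (u t + 1) with hqdef
  have hden : ∀ t, u t + 1 ≠ 0 := fun t => by have := hu t; positivity
  have hq : ∀ t, HasDerivAt q ((2 * ε) * q t) t := by
    intro t
    have hnum : HasDerivAt (fun t => u t - 1) (deriv u t) t := (hd t).hasDerivAt.sub_const 1
    have hden' : HasDerivAt (fun t => u t + 1) (deriv u t) t := (hd t).hasDerivAt.add_const 1
    have h := hnum.div hden' (hden t)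
    refine h.congr_deriv ?_
    rw [hode t, hqdef]
    field_simp [hden t]
    ring
  have hsol := exp_sol q (2 * ε) hq
  have hq0 : 0 < q 0 := by
    have := hu 0
    apply div_pos <;> linarith
  have hqlt : ∀ t, q t < 1 := by
    intro t
    rw [hqdef, div_lt_one (by have := hu t; linarith)]
    linarith
  set T : ℝ := 1 / (2 * q 0) with hT
  have hTpos : 0 < T := by positivity
  have hval : q (ε * T) = q 0 * Real.exp (2 * T) := by
    rw [hsol (ε * T)]
    congr 1
    rw [show 2 * ε * (ε * T) = 2 * ε ^ 2 * T by ring, hε]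
    ring
  have hbig : 1 < q 0 * Real.exp (2 * T) := by
    have h1 : 2 * T + 1 ≤ Real.exp (2 * T) := Real.add_one_le_exp (2 * T)
    have h2 : q 0 * (2 * T + 1) ≤ q 0 * Real.exp (2 * T) :=
      mul_le_mul_of_nonneg_left h1 hq0.le
    have h3 : q 0 * (2 * T + 1) = 1 + q 0 := by
      rw [hT]; field_simp
    linarith
  have := hqlt (ε * T)
  rw [hval] at this
  linarith

lemma tanh_case (u : ℝ → ℝ) (hd : Differentiable ℝ u) (hb : ∀ t, -1 < u t ∧ u t < 1)
    (hode : ∀ t, deriv u t = (u t) ^ 2 - 1) :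
    ∃ a : ℝ, 0 < a ∧ ∀ t, u t = (a ^ 2 - Real.exp (2 * t)) / (a ^ 2 + Real.exp (2 * t)) := by
  set q : ℝ → ℝ := fun t => (1 - u t) / (1 + u t) with hqdef
  have hden : ∀ t, 0 < 1 + u t := fun t => by have := (hb t).1; linarith
  have hq : ∀ t, HasDerivAt q (2 * q t) t := by
    intro t
    have hnum : HasDerivAt (fun t => 1 - u t) (-(deriv u t)) t := by
      simpa using ((hd t).hasDerivAt.const_sub 1)
    have hden' : HasDerivAt (fun t => 1 + u t) (deriv u t) t := by
      simpa using ((hd t).hasDerivAt.const_add 1)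
    have h := hnum.div hden' (hden t).ne'
    refine h.congr_deriv ?_
    rw [hode t, hqdef]
    field_simp [(hden t).ne']
    ring
  have hsol := exp_sol q 2 hq
  have hq0 : 0 < q 0 := div_pos (by have := (hb 0).2; linarith) (hden 0)
  set C : ℝ := q 0 with hC
  refine ⟨(Real.sqrt C)⁻¹, by positivity, ?_⟩
  set a : ℝ := (Real.sqrt C)⁻¹ with ha
  have hCa : C * a ^ 2 = 1 := by
    rw [ha, inv_pow, Real.sq_sqrt hq0.le]
    field_simp
  intro t
  have hq_t : 1 - u t = C * Real.exp (2 * t) * (1 + u t) := by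
    have h := hsol t
    rw [hqdef] at h
    rw [div_eq_iff (hden t).ne'] at h
    exact h
  have key : (1 - u t) * a ^ 2 = Real.exp (2 * t) * (1 + u t) := by
    linear_combination a ^ 2 * hq_t + Real.exp (2 * t) * (1 + u t) * hCa
  have hpos : 0 < a ^ 2 + Real.exp (2 * t) := by positivity
  rw [eq_div_iff hpos.ne']
  linear_combination (-1 : ℝ) * key

theorem stmt7 (v : ℝ → ℝ) (hreg : ContDiff ℝ 2 v)
    (hode : ∀ t : ℝ, -(deriv (deriv v) t) = 2 * v t * (1 - (v t) ^ 2))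
    (hc : ∀ t : ℝ, (deriv v t) ^ 2 = ((v t) ^ 2 - 1) ^ 2) :
    (∀ t : ℝ, v t = 0) ∨ (∀ t : ℝ, v t = 1) ∨ (∀ t : ℝ, v t = -1) ∨
      ∃ a : ℝ, 0 < a ∧
        ((∀ t : ℝ, v t = (a ^ 2 - Real.exp (2 * t)) / (a ^ 2 + Real.exp (2 * t))) ∨
         (∀ t : ℝ, v t = -((a ^ 2 - Real.exp (2 * t)) / (a ^ 2 + Real.exp (2 * t))))) := by
  have hd : Differentiable ℝ v := hreg.differentiable (by norm_num)
  by_cases hhit : ∃ t₀, (v t₀) ^ 2 = 1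
  · obtain ⟨t₀, h1⟩ := hhit
    rcases lemA v hreg hc t₀ h1 with h | h
    · exact Or.inr (Or.inl h)
    · exact Or.inr (Or.inr (Or.inl h))
  push_neg at hhit
  have hcd : Continuous (deriv v) := hreg.continuous_deriv (by norm_num)
  have hsubne : ∀ t, (v t) ^ 2 - 1 ≠ 0 := fun t => sub_ne_zero.mpr (hhit t)
  have hφne : ∀ t, deriv v t * ((v t) ^ 2 - 1) ≠ 0 := by
    intro t
    have h2 : deriv v t ≠ 0 := by
      intro h
      have hct := hc t
      rw [h] at hct
      exact hsubne t (by nlinarith)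
    exact mul_ne_zero h2 (hsubne t)
  have hne1 : ∀ t, v t ≠ 1 := by
    intro t h; exact hhit t (by rw [h]; norm_num)
  have hnem1 : ∀ t, v t ≠ -1 := by
    intro t h; exact hhit t (by rw [h]; norm_num)
  have hφcont : Continuous fun t => deriv v t * ((v t) ^ 2 - 1) :=
    hcd.mul ((hd.continuous.pow 2).sub continuous_const)
  -- sign of deriv: obtain ode with sign ε
  have hε : ∃ ε : ℝ, ε ^ 2 = 1 ∧ ∀ t, deriv v t = ε * ((v t) ^ 2 - 1) := by
    rcases sign_dichotomy _ hφcont hφne with hpos | hneg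
    · exact ⟨1, by norm_num, fun t => by
        rw [one_mul]; exact sqa_pos _ _ (hc t) (hpos t)⟩
    · exact ⟨-1, by norm_num, fun t => by
        have := sqa_neg _ _ (hc t) (hneg t); rw [this]; ring⟩
  obtain ⟨ε, hε2, hodeε⟩ := hε
  -- v stays in (-1, 1)
  have hbound : ∀ t, -1 < v t ∧ v t < 1 := by
    rcases lt_trichotomy (v 0) 1 with h01 | h01 | h01
    · rcases lt_trichotomy (v 0) (-1) with h0m | h0m | h0m
      · -- v < -1 everywhere, blow up for u = -v
        exfalso
        have hall : ∀ t, v t < -1 := stay_lt v hd.continuous (-1) hnem1 h0m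
        refine blowup_s7 (fun t => -v t) hd.neg (-ε) (by nlinarith) (fun t => by
          have := hall t; simp; linarith) ?_
        intro t
        have hder : deriv (fun t => -v t) t = -(deriv v t) := deriv.neg
        rw [hder, hodeε t]
        ring_nf
      · exact absurd h0m (hnem1 0)
      · -- bounded case
        intro t
        constructor
        · have : ∀ s, -v s < 1 := stay_lt (fun s => -v s) hd.continuous.neg 1
            (fun s h => hnem1 s (by linarith)) (by show -v 0 < 1; linarith)
          linarith [this t]
        · exact stay_lt v hd.continuous 1 hne1 h01 t
    · exact absurd h01 (hne1 0)
    · -- v > 1 everywhere, blow up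
      exfalso
      have hall : ∀ t, 1 < v t := by
        have : ∀ s, -v s < -1 := stay_lt (fun s => -v s) hd.continuous.neg (-1)
          (fun s h => hne1 s (by simp at h; linarith)) (by show -v 0 < -1; linarith)
        intro t; linarith [this t]
      exact blowup_s7 v hd ε hε2 hall hodeε
  -- now solve
  have hεcases : ε = 1 ∨ ε = -1 := by
    have h2 : (ε - 1) * (ε + 1) = 0 := by linear_combination hε2
    rcases mul_eq_zero.mp h2 with h3 | h3
    · left; linarith
    · right; linarith
  rcases hεcases with hε1 | hεm1
  · -- deriv v = v^2 - 1 : first family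
    subst hε1
    obtain ⟨a, ha, hform⟩ := tanh_case v hd hbound (fun t => by rw [hodeε t]; ring)
    exact Or.inr (Or.inr (Or.inr ⟨a, ha, Or.inl hform⟩))
  · -- deriv v = 1 - v^2 : second family via u = -v
    subst hεm1
    have hub : ∀ t, -1 < -v t ∧ -v t < 1 := fun t => ⟨by linarith [(hbound t).2], by linarith [(hbound t).1]⟩
    obtain ⟨a, ha, hform⟩ := tanh_case (fun t => -v t) hd.neg hub (fun t => by
      have hder : deriv (fun t => -v t) t = -(deriv v t) := deriv.neg
      rw [hder, hodeε t]; ring)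
    refine Or.inr (Or.inr (Or.inr ⟨a, ha, Or.inr fun t => ?_⟩))
    have := hform t
    linarith
end

section
/- Suppose u ∈ C²(ℝ²\{0}) solves -Δu = (2/|x|²)·u·(1-u²) on ℝ²\{0} and lim_{x→0} u(x) = a for some real number a. Then a ∈ {-1, 0, 1}. -/
lemma iteratedDeriv_two (f : ℝ → ℝ) : iteratedDeriv 2 f = deriv (deriv f) := by
  rw [iteratedDeriv_succ, iteratedDeriv_one]

lemma second_deriv_nonpos_of_isLocalMax {g : ℝ → ℝ} {a : ℝ}
    (hg : ContDiffAt ℝ 2 g a) (h : IsLocalMax g a) : iteratedDeriv 2 g a ≤ 0 := by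
  rw [iteratedDeriv_two]
  by_contra hpos
  push_neg at hpos
  obtain ⟨U, hUn, hU⟩ : ∃ U ∈ nhds a, ContDiffOn ℝ 2 g U := hg.contDiffOn le_rfl (by simp)
  set V := interior U with hV
  have hVo : IsOpen V := isOpen_interior
  have haV : a ∈ V := mem_interior_iff_mem_nhds.2 hUn
  have hUV : ContDiffOn ℝ 2 g V := hU.mono interior_subset
  have hd1 : ContDiffOn ℝ 1 (deriv g) V := hUV.deriv_of_isOpen hVo (by norm_num)
  have hcont2 : ContinuousOn (deriv (deriv g)) V :=
    hd1.continuousOn_deriv_of_isOpen hVo le_rfl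
  have hc2at : ContinuousAt (deriv (deriv g)) a :=
    hcont2.continuousAt (hVo.mem_nhds haV)
  have hev : ∀ᶠ x in nhds a, 0 < deriv (deriv g) x ∧ x ∈ V ∧ g x ≤ g a := by
    filter_upwards [continuousAt_const.eventually_lt hc2at hpos, hVo.mem_nhds haV, h] with
      x h1 h2 h3
    exact ⟨h1, h2, h3⟩
  obtain ⟨ρ, hρ, hball⟩ := Metric.eventually_nhds_iff_ball.1 hev
  have hIV : Set.Ioo (a - ρ) (a + ρ) ⊆ Metric.ball a ρ := by
    intro x hx
    rw [Real.ball_eq_Ioo]; exact hx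
  -- deriv g is strictly monotone on the interval
  have hdiffg : ∀ x ∈ Metric.ball a ρ, DifferentiableAt ℝ g x := fun x hx =>
    (hUV.differentiableOn (by norm_num)).differentiableAt (hVo.mem_nhds (hball _ hx).2.1)
  have hdiffdg : ∀ x ∈ Metric.ball a ρ, DifferentiableAt ℝ (deriv g) x := fun x hx =>
    (hd1.differentiableOn (by norm_num)).differentiableAt (hVo.mem_nhds (hball _ hx).2.1)
  have hmono : StrictMonoOn (deriv g) (Set.Ioo (a - ρ) (a + ρ)) := by
    apply strictMonoOn_of_deriv_pos (convex_Ioo _ _)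
    · exact fun x hx => ((hdiffdg x (hIV hx)).continuousAt).continuousWithinAt
    · intro x hx
      rw [interior_Ioo] at hx
      exact (hball _ (hIV hx)).1
  have hda : deriv g a = 0 := h.deriv_eq_zero
  have hmono2 : StrictMonoOn g (Set.Ico a (a + ρ)) := by
    apply strictMonoOn_of_deriv_pos (convex_Ico _ _)
    · intro x hx
      have : x ∈ Metric.ball a ρ := by
        rw [Real.ball_eq_Ioo]; constructor <;> [linarith [hx.1]; exact hx.2]
      exact ((hdiffg x this).continuousAt).continuousWithinAt
    · intro x hx
      rw [interior_Ico] at hx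
      have hx1 : x ∈ Set.Ioo (a - ρ) (a + ρ) := ⟨by linarith [hx.1], hx.2⟩
      have ha1 : a ∈ Set.Ioo (a - ρ) (a + ρ) := by constructor <;> linarith
      have := hmono ha1 hx1 hx.1
      rw [hda] at this; exact this
  have h1 : a ∈ Set.Ico a (a + ρ) := ⟨le_rfl, by linarith⟩
  have h2 : a + ρ/2 ∈ Set.Ico a (a + ρ) := ⟨by linarith, by linarith⟩
  have h3 := hmono2 h1 h2 (by linarith)
  have h4 : a + ρ/2 ∈ Metric.ball a ρ := by rw [Real.ball_eq_Ioo]; constructor <;> linarith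
  have := (hball _ h4).2.2
  linarith



lemma iteratedDeriv_two_sub_quad {f : ℝ → ℝ} {x : ℝ} (hf : ContDiffAt ℝ 2 f x) (β c d : ℝ) :
    iteratedDeriv 2 (fun s => f s - β * ((s - c) ^ 2 + d)) x = iteratedDeriv 2 f x - 2 * β := by
  rw [iteratedDeriv_two, iteratedDeriv_two]
  obtain ⟨U, hUn, hU⟩ : ∃ U ∈ nhds x, ContDiffOn ℝ 2 f U := hf.contDiffOn le_rfl (by simp)
  set V := interior U with hV
  have hVo : IsOpen V := isOpen_interior
  have hxV : x ∈ V := mem_interior_iff_mem_nhds.2 hUn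
  have hUV : ContDiffOn ℝ 2 f V := hU.mono interior_subset
  have hQd : ∀ s : ℝ, HasDerivAt (fun s => β * ((s - c) ^ 2 + d)) (β * (2 * (s - c))) s := by
    intro s
    have h1 : HasDerivAt (fun s : ℝ => s - c) 1 s := (hasDerivAt_id s).sub_const c
    have h2 := (h1.pow 2).add_const d
    have h3 := h2.const_mul β
    exact h3.congr_deriv (by ring)
  have heq : Set.EqOn (deriv (fun s => f s - β * ((s - c) ^ 2 + d)))
      (fun s => deriv f s - β * (2 * (s - c))) V := by
    intro s hs
    have hfd : DifferentiableAt ℝ f s :=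
      (hUV.differentiableOn (by norm_num)).differentiableAt (hVo.mem_nhds hs)
    rw [deriv_fun_sub hfd (hQd s).differentiableAt, (hQd s).deriv]
  have hee : deriv (fun s => f s - β * ((s - c) ^ 2 + d)) =ᶠ[nhds x]
      (fun s => deriv f s - β * (2 * (s - c))) :=
    Filter.eventuallyEq_of_mem (hVo.mem_nhds hxV) heq
  rw [hee.deriv_eq]
  have hd1 : DifferentiableAt ℝ (deriv f) x :=
    ((hUV.deriv_of_isOpen (m := 1) hVo (by norm_num)).differentiableOn (by norm_num)).differentiableAt
      (hVo.mem_nhds hxV)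
  have hlin : HasDerivAt (fun s : ℝ => β * (2 * (s - c))) (2 * β) x := by
    have heq2 : (fun s : ℝ => β * (2 * (s - c))) = fun s => 2 * β * (s - c) := by
      funext s; ring
    rw [heq2]
    simpa using ((hasDerivAt_id x).sub_const c).const_mul (2 * β)
  rw [deriv_fun_sub hd1 hlin.differentiableAt, hlin.deriv]






lemma aux_false (v : ℝ × ℝ → ℝ)
    (hreg : ContDiffOn ℝ 2 v {x : ℝ × ℝ | x ≠ 0})
    (hlap : ∀ x : ℝ × ℝ, x ≠ 0 → lap v x = (2 / (x.1 ^ 2 + x.2 ^ 2)) * ((v x) ^ 3 - v x))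
    (b : ℝ) (hb : 0 < b ^ 3 - b)
    (hlim : Filter.Tendsto v (nhdsWithin (0 : ℝ × ℝ) {x | x ≠ 0}) (nhds b)) : False := by
  have hopen : IsOpen {x : ℝ × ℝ | x ≠ 0} := isOpen_ne
  set m := (b ^ 3 - b) / 2 with hm_def
  have hm : 0 < m := by positivity
  have hcontb : ContinuousAt (fun s : ℝ => s ^ 3 - s) b := by fun_prop
  have hev : ∀ᶠ s in nhds b, m < s ^ 3 - s :=
    continuousAt_const.eventually_lt hcontb (by simp [hm_def]; linarith)
  obtain ⟨ζ, hζ, hζball⟩ := Metric.eventually_nhds_iff_ball.1 hev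
  set ε := min ζ (m / 4096) with hε_def
  have hεpos : 0 < ε := lt_min hζ (by positivity)
  obtain ⟨δ, hδ, hδball⟩ := Metric.tendsto_nhdsWithin_nhds.1 hlim ε hεpos
  -- the center and radius
  set p : ℝ × ℝ := (3 / 4 * δ, 0) with hp_def
  set r : ℝ := δ / 8 with hr_def
  set β : ℝ := m / (8 * δ ^ 2) with hβ_def
  have hrpos : 0 < r := by positivity
  have hβpos : 0 < β := by positivity
  -- facts about points in the closed ball
  have hreg1 : ∀ x ∈ Metric.closedBall p r, (5 / 8 * δ ≤ x.1 ∧ x ≠ 0 ∧ ‖x‖ < δ) := by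
    intro x hx
    rw [Metric.mem_closedBall, dist_eq_norm] at hx
    have h1 : |x.1 - p.1| ≤ r := le_trans (norm_fst_le (x - p)) hx
    have h1' : |x.1 - 3 / 4 * δ| ≤ r := by simpa [hp_def] using h1
    have hx1 : 5 / 8 * δ ≤ x.1 := by
      have := abs_le.1 h1'
      simp only [hr_def] at this
      linarith [this.1]
    have hx1pos : 0 < x.1 := by linarith
    have hxne : x ≠ 0 := by
      intro h0
      rw [h0] at hx1pos
      exact lt_irrefl _ hx1pos
    have hnp : ‖p‖ = 3 / 4 * δ := by
      rw [hp_def, Prod.norm_def]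
      simp [Real.norm_eq_abs, abs_of_pos hδ]
      exact hδ.le
    have hxn : ‖x‖ < δ := by
      calc ‖x‖ = ‖p + (x - p)‖ := by ring_nf
        _ ≤ ‖p‖ + ‖x - p‖ := norm_add_le _ _
        _ ≤ 3 / 4 * δ + r := by rw [hnp]; linarith
        _ < δ := by simp only [hr_def]; linarith
    exact ⟨hx1, hxne, hxn⟩
  have hvclose : ∀ x ∈ Metric.closedBall p r, |v x - b| < ζ ∧ |v x - b| < m / 4096 := by
    intro x hx
    obtain ⟨-, hxne, hxn⟩ := hreg1 x hx
    have := hδball (by exact hxne) (by rwa [dist_zero_right])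
    rw [Real.dist_eq] at this
    exact ⟨lt_of_lt_of_le this (min_le_left _ _), lt_of_lt_of_le this (min_le_right _ _)⟩
  have hlapge : ∀ x ∈ Metric.closedBall p r, m / δ ^ 2 ≤ lap v x := by
    intro x hx
    obtain ⟨hx1, hxne, hxn⟩ := hreg1 x hx
    have hvb := (hvclose x hx).1
    have hcube : m < (v x) ^ 3 - v x := by
      have : v x ∈ Metric.ball b ζ := by rwa [Metric.mem_ball, Real.dist_eq]
      exact hζball _ this
    have hx1n : |x.1| ≤ ‖x‖ := norm_fst_le x
    have hx2n : |x.2| ≤ ‖x‖ := norm_snd_le x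
    have hden_pos : 0 < x.1 ^ 2 + x.2 ^ 2 := by
      have h0 : 0 < x.1 := by linarith
      have h1 : 0 < x.1 ^ 2 := by positivity
      nlinarith [sq_nonneg x.2]
    have hden_le : x.1 ^ 2 + x.2 ^ 2 ≤ 2 * δ ^ 2 := by
      have h1 : x.1 ^ 2 ≤ ‖x‖ ^ 2 := by
        rw [← sq_abs x.1]; exact pow_le_pow_left₀ (abs_nonneg _) hx1n 2
      have h2 : x.2 ^ 2 ≤ ‖x‖ ^ 2 := by
        rw [← sq_abs x.2]; exact pow_le_pow_left₀ (abs_nonneg _) hx2n 2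
      have h3 : ‖x‖ ^ 2 ≤ δ ^ 2 := pow_le_pow_left₀ (norm_nonneg _) hxn.le 2
      linarith
    have hA : 1 / δ ^ 2 ≤ 2 / (x.1 ^ 2 + x.2 ^ 2) := by
      rw [div_le_div_iff₀ (by positivity) hden_pos]
      linarith
    rw [hlap x hxne]
    calc m / δ ^ 2 = (1 / δ ^ 2) * m := by ring
      _ ≤ (2 / (x.1 ^ 2 + x.2 ^ 2)) * ((v x) ^ 3 - v x) :=
        mul_le_mul hA hcube.le hm.le (by positivity)
  -- the comparison function
  set w : ℝ × ℝ → ℝ := fun x => v x - β * ((x.1 - p.1) ^ 2 + (x.2 - p.2) ^ 2) with hw_def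
  have hball_sub : Metric.closedBall p r ⊆ {x : ℝ × ℝ | x ≠ 0} := fun x hx =>
    (hreg1 x hx).2.1
  have hwc : ContinuousOn w (Metric.closedBall p r) := by
    apply ContinuousOn.sub (hreg.continuousOn.mono hball_sub)
    fun_prop
  obtain ⟨q, hqmem, hqmax⟩ := (isCompact_closedBall p r).exists_isMaxOn
    ⟨p, Metric.mem_closedBall_self hrpos.le⟩ hwc
  by_cases hqi : dist q p < r
  · -- interior case: maximum principle contradiction
    have hql : IsLocalMax w q :=
      hqmax.isLocalMax (Filter.mem_of_superset ((Metric.isOpen_ball).mem_nhds hqi)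
        Metric.ball_subset_closedBall)
    have hq0 : q ≠ 0 := (hreg1 q hqmem).2.1
    have hvC : ContDiffAt ℝ 2 v q := hreg.contDiffAt (hopen.mem_nhds hq0)
    -- first slice
    have hι1 : ContDiffAt ℝ 2 (fun s : ℝ => (s, q.2)) q.1 :=
      (contDiff_id.prodMk contDiff_const).contDiffAt
    have hslice1 : ContDiffAt ℝ 2 (fun s => v (s, q.2)) q.1 :=
      hvC.comp q.1 hι1
    have hι2 : ContDiffAt ℝ 2 (fun s : ℝ => (q.1, s)) q.2 :=
      (contDiff_const.prodMk contDiff_id).contDiffAt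
    have hslice2 : ContDiffAt ℝ 2 (fun s => v (q.1, s)) q.2 :=
      hvC.comp q.2 hι2
    -- slice local maxima
    have hg1max : IsLocalMax (fun s => w (s, q.2)) q.1 := by
      have hc : ContinuousAt (fun s : ℝ => ((s, q.2) : ℝ × ℝ)) q.1 := by fun_prop
      exact hc.tendsto.eventually hql
    have hg2max : IsLocalMax (fun s => w (q.1, s)) q.2 := by
      have hc : ContinuousAt (fun s : ℝ => ((q.1, s) : ℝ × ℝ)) q.2 := by fun_prop
      exact hc.tendsto.eventually hql
    -- rewrite slices of w
    have hfe1 : (fun s => w (s, q.2)) =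
        fun s => v (s, q.2) - β * ((s - p.1) ^ 2 + (q.2 - p.2) ^ 2) := by
      funext s; simp only [hw_def]
    have hfe2 : (fun s => w (q.1, s)) =
        fun s => v (q.1, s) - β * ((s - p.2) ^ 2 + (q.1 - p.1) ^ 2) := by
      funext s; simp only [hw_def]; ring
    have hwq1 : ContDiffAt ℝ 2 (fun s => w (s, q.2)) q.1 := by
      rw [hfe1]
      exact hslice1.sub (by fun_prop)
    have hwq2 : ContDiffAt ℝ 2 (fun s => w (q.1, s)) q.2 := by
      rw [hfe2]
      exact hslice2.sub (by fun_prop)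
    have hA := second_deriv_nonpos_of_isLocalMax hwq1 hg1max
    have hB := second_deriv_nonpos_of_isLocalMax hwq2 hg2max
    have e1 : iteratedDeriv 2 (fun s => w (s, q.2)) q.1 =
        iteratedDeriv 2 (fun s => v (s, q.2)) q.1 - 2 * β := by
      rw [hfe1, iteratedDeriv_two_sub_quad hslice1]
    have e2 : iteratedDeriv 2 (fun s => w (q.1, s)) q.2 =
        iteratedDeriv 2 (fun s => v (q.1, s)) q.2 - 2 * β := by
      rw [hfe2, iteratedDeriv_two_sub_quad hslice2]
    rw [e1] at hA
    rw [e2] at hB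
    have hlq := hlapge q hqmem
    simp only [lap] at hlq
    have hc4 : 4 * β = m / (2 * δ ^ 2) := by
      rw [hβ_def]; field_simp; ring
    have hpos2 : 0 < m / (2 * δ ^ 2) := by positivity
    have hpos3 : m / (2 * δ ^ 2) < m / δ ^ 2 := by
      rw [div_lt_div_iff₀ (by positivity) (by positivity)]
      nlinarith [mul_pos hm (by positivity : (0:ℝ) < δ ^ 2)]
    linarith
  · -- boundary case
    have hqd : dist q p = r := le_antisymm (Metric.mem_closedBall.1 hqmem) (not_lt.1 hqi)
    have hwq := hqmax (Metric.mem_closedBall_self hrpos.le)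
    have hφ : r ^ 2 ≤ (q.1 - p.1) ^ 2 + (q.2 - p.2) ^ 2 := by
      have hrn : r = ‖q - p‖ := by rw [← dist_eq_norm]; exact hqd.symm
      have hmax : ‖q - p‖ = max |q.1 - p.1| |q.2 - p.2| := by
        rw [Prod.norm_def]; rfl
      rcases max_cases |q.1 - p.1| |q.2 - p.2| with ⟨h1, -⟩ | ⟨h1, -⟩ <;>
        rw [hmax, h1] at hrn <;> rw [hrn, sq_abs] <;> nlinarith [sq_nonneg (q.1 - p.1), sq_nonneg (q.2 - p.2)]
    have hwp : w p = v p := by simp [hw_def]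
    have hwqe : w q = v q - β * ((q.1 - p.1) ^ 2 + (q.2 - p.2) ^ 2) := rfl
    have hprod : β * r ^ 2 ≤ β * ((q.1 - p.1) ^ 2 + (q.2 - p.2) ^ 2) :=
      mul_le_mul_of_nonneg_left hφ hβpos.le
    have hβr : β * r ^ 2 = m / 512 := by
      rw [hβ_def, hr_def]; field_simp; ring
    have hvq := (hvclose q hqmem).2
    have hvp := (hvclose p (Metric.mem_closedBall_self hrpos.le)).2
    have hvq' := abs_lt.1 hvq
    have hvp' := abs_lt.1 hvp
    simp only [Set.mem_setOf_eq] at hwq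
    rw [hwp, hwqe] at hwq
    linarith

lemma lap_neg (u : ℝ × ℝ → ℝ) (x : ℝ × ℝ) : lap (fun y => -u y) x = -lap u x := by
  have key : ∀ g : ℝ → ℝ, ∀ t : ℝ,
      iteratedDeriv 2 (fun s => -g s) t = -iteratedDeriv 2 g t := by
    intro g t
    rw [iteratedDeriv_two, iteratedDeriv_two]
    have h1 : deriv (fun s => -g s) = fun s => -deriv g s := funext fun s => deriv.neg
    rw [h1]
    exact deriv.neg
  simp only [lap, key]
  ring

theorem stmt14 (u : ℝ × ℝ → ℝ)
    (hreg : ContDiffOn ℝ 2 u {x : ℝ × ℝ | x ≠ 0})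
    (hpde : ∀ x : ℝ × ℝ, x ≠ 0 →
      -lap u x = (2 / (x.1 ^ 2 + x.2 ^ 2)) * u x * (1 - (u x) ^ 2))
    (a : ℝ) (hlim : Filter.Tendsto u (nhdsWithin (0 : ℝ × ℝ) {x | x ≠ 0}) (nhds a)) :
    a = -1 ∨ a = 0 ∨ a = 1 := by
  by_contra hcon
  push_neg at hcon
  obtain ⟨h1, h2, h3⟩ := hcon
  have hlap : ∀ x : ℝ × ℝ, x ≠ 0 →
      lap u x = (2 / (x.1 ^ 2 + x.2 ^ 2)) * ((u x) ^ 3 - u x) := by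
    intro x hx
    have h := hpde x hx
    linear_combination -h
  have hne : a ^ 3 - a ≠ 0 := by
    intro h
    have : a * (a - 1) * (a + 1) = 0 := by linear_combination h
    rcases mul_eq_zero.1 this with h' | h'
    · rcases mul_eq_zero.1 h' with h'' | h''
      · exact h2 h''
      · exact h3 (by linarith)
    · exact h1 (by linarith)
  rcases lt_or_gt_of_ne hne with hneg | hpos
  · -- a^3 - a < 0 : use -u
    apply aux_false (fun y => -u y) hreg.neg ?_ (-a) (by nlinarith) hlim.neg
    intro x hx
    rw [lap_neg]
    have h := hlap x hx
    linear_combination -h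
  · exact aux_false u hreg hlap a hpos hlim
end

section
/- Let v ∈ C²(ℝ²) solve -∂ₜₜv - ∂_θθ v = 2v(1-v²) with v(t, θ+2π) = v(t, θ), |v| ≤ 1 everywhere, and lim_{t→∞} v(t,θ) = 1 uniformly in θ, together with lim_{t→∞} ∂ₜv = lim_{t→∞} ∂_θ v = 0 uniformly in θ. If moreover there exists Λ ∈ ℝ with v(Λ, θ) reflectionally symmetric, i.e., v(t,θ) = v(2Λ - t, θ) for all (t,θ), then v ≡ 1 on ℝ². -/
open MeasureTheory Set
set_option maxHeartbeats 1000000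

noncomputable def pdt (f : ℝ × ℝ → ℝ) (p : ℝ × ℝ) : ℝ := deriv (fun s => f (s, p.2)) p.1

noncomputable def pdθ (f : ℝ × ℝ → ℝ) (p : ℝ × ℝ) : ℝ := deriv (fun s => f (p.1, s)) p.2


namespace Stmt16Aux

noncomputable def D1 (v : ℝ × ℝ → ℝ) (p : ℝ × ℝ) : ℝ := fderiv ℝ v p (1, 0)
noncomputable def D2 (v : ℝ × ℝ → ℝ) (p : ℝ × ℝ) : ℝ := fderiv ℝ v p (0, 1)
noncomputable def Bv (v : ℝ × ℝ → ℝ) (p : ℝ × ℝ) : (ℝ × ℝ) →L[ℝ] (ℝ × ℝ) →L[ℝ] ℝ :=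
  fderiv ℝ (fderiv ℝ v) p

variable {v : ℝ × ℝ → ℝ}

lemma sliceT (hreg : ContDiff ℝ 2 v) (p : ℝ × ℝ) :
    HasDerivAt (fun s => v (s, p.2)) (D1 v p) p.1 := by
  have h1 : HasDerivAt (fun s : ℝ => (s, p.2)) ((1:ℝ), (0:ℝ)) p.1 :=
    (hasDerivAt_id p.1).prodMk (hasDerivAt_const p.1 p.2)
  exact (hreg.differentiable two_ne_zero (p.1, p.2)).hasFDerivAt.comp_hasDerivAt p.1 h1

lemma sliceθ (hreg : ContDiff ℝ 2 v) (p : ℝ × ℝ) :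
    HasDerivAt (fun s => v (p.1, s)) (D2 v p) p.2 := by
  have h1 : HasDerivAt (fun s : ℝ => (p.1, s)) ((0:ℝ), (1:ℝ)) p.2 :=
    (hasDerivAt_const p.2 p.1).prodMk (hasDerivAt_id p.2)
  exact (hreg.differentiable two_ne_zero (p.1, p.2)).hasFDerivAt.comp_hasDerivAt p.2 h1

lemma diff2 (hreg : ContDiff ℝ 2 v) : Differentiable ℝ (fderiv ℝ v) :=
  (hreg.fderiv_right (le_refl _)).differentiable one_ne_zero

lemma DT (hreg : ContDiff ℝ 2 v) (a : ℝ × ℝ) (p : ℝ × ℝ) :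
    HasDerivAt (fun s => fderiv ℝ v (s, p.2) a) (Bv v p (1, 0) a) p.1 := by
  have h1 : HasDerivAt (fun s : ℝ => (s, p.2)) ((1:ℝ), (0:ℝ)) p.1 :=
    (hasDerivAt_id p.1).prodMk (hasDerivAt_const p.1 p.2)
  have h2 : HasFDerivAt (fun q => fderiv ℝ v q a) (((Bv v p).flip) a) p := by
    simpa [Bv] using (diff2 hreg p).hasFDerivAt.clm_apply (hasFDerivAt_const a p)
  exact h2.comp_hasDerivAt p.1 h1

lemma Dθ (hreg : ContDiff ℝ 2 v) (a : ℝ × ℝ) (p : ℝ × ℝ) :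
    HasDerivAt (fun s => fderiv ℝ v (p.1, s) a) (Bv v p (0, 1) a) p.2 := by
  have h1 : HasDerivAt (fun s : ℝ => (p.1, s)) ((0:ℝ), (1:ℝ)) p.2 :=
    (hasDerivAt_const p.2 p.1).prodMk (hasDerivAt_id p.2)
  have h2 : HasFDerivAt (fun q => fderiv ℝ v q a) (((Bv v p).flip) a) p := by
    simpa [Bv] using (diff2 hreg p).hasFDerivAt.clm_apply (hasFDerivAt_const a p)
  exact h2.comp_hasDerivAt p.2 h1

lemma Bsymm (hreg : ContDiff ℝ 2 v) (p x y : ℝ × ℝ) : Bv v p x y = Bv v p y x :=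
  second_derivative_symmetric (fun q => (hreg.differentiable two_ne_zero q).hasFDerivAt)
    (diff2 hreg p).hasFDerivAt x y

lemma cont_v (hreg : ContDiff ℝ 2 v) : Continuous v := hreg.continuous

lemma contDiff_fderiv (hreg : ContDiff ℝ 2 v) : ContDiff ℝ 1 (fderiv ℝ v) :=
  hreg.fderiv_right (le_refl _)

lemma cont_D1 (hreg : ContDiff ℝ 2 v) : Continuous (D1 v) :=
  ((contDiff_fderiv hreg).continuous).clm_apply continuous_const

lemma cont_D2 (hreg : ContDiff ℝ 2 v) : Continuous (D2 v) :=
  ((contDiff_fderiv hreg).continuous).clm_apply continuous_const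

lemma cont_B (hreg : ContDiff ℝ 2 v) (a b : ℝ × ℝ) :
    Continuous (fun p => Bv v p a b) := by
  have : Continuous (Bv v) := (contDiff_fderiv hreg).continuous_fderiv one_ne_zero
  exact (this.clm_apply continuous_const).clm_apply continuous_const

lemma lap_eq (hreg : ContDiff ℝ 2 v) (p : ℝ × ℝ) :
    lap v p = Bv v p (1, 0) (1, 0) + Bv v p (0, 1) (0, 1) := by
  have ht : deriv (fun s => v (s, p.2)) = fun s => D1 v (s, p.2) := by
    funext s; exact (sliceT hreg (s, p.2)).deriv
  have hθ : deriv (fun s => v (p.1, s)) = fun s => D2 v (p.1, s) := by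
    funext s; exact (sliceθ hreg (p.1, s)).deriv
  have h1 : iteratedDeriv 2 (fun s => v (s, p.2)) p.1 = Bv v p (1, 0) (1, 0) := by
    rw [iteratedDeriv_succ, iteratedDeriv_one, ht]
    exact (DT hreg (1, 0) p).deriv
  have h2 : iteratedDeriv 2 (fun s => v (p.1, s)) p.2 = Bv v p (0, 1) (0, 1) := by
    rw [iteratedDeriv_succ, iteratedDeriv_one, hθ]
    exact (Dθ hreg (0, 1) p).deriv
  rw [lap, h1, h2]

lemma pdt_eq (hreg : ContDiff ℝ 2 v) (p : ℝ × ℝ) : pdt v p = D1 v p :=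
  (sliceT hreg p).deriv

lemma pdθ_eq (hreg : ContDiff ℝ 2 v) (p : ℝ × ℝ) : pdθ v p = D2 v p :=
  (sliceθ hreg p).deriv

lemma fderiv_per (hreg : ContDiff ℝ 2 v) (hper : ∀ t θ : ℝ, v (t, θ + 2 * Real.pi) = v (t, θ))
    (p : ℝ × ℝ) : fderiv ℝ v (p.1, p.2 + 2 * Real.pi) = fderiv ℝ v p := by
  set g : ℝ × ℝ → ℝ × ℝ := fun q => (q.1, q.2 + 2 * Real.pi) with hg
  have hvg : (fun q => v (g q)) = v := by
    funext q; exact hper q.1 q.2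
  have hgd : HasFDerivAt g (ContinuousLinearMap.id ℝ (ℝ × ℝ)) p := by
    have : HasFDerivAt (fun q : ℝ × ℝ => q + ((0:ℝ), 2 * Real.pi))
        (ContinuousLinearMap.id ℝ (ℝ × ℝ)) p := (hasFDerivAt_id p).add_const _
    convert this using 2 with q
    · simp [hg, Prod.ext_iff]
  have hcomp := ((hreg.differentiable two_ne_zero (g p)).hasFDerivAt).comp p hgd
  have hvg' : v ∘ g = v := hvg
  rw [hvg'] at hcomp
  have := hcomp.fderiv
  rw [this]
  simp [hg]

lemma D1_per (hreg : ContDiff ℝ 2 v) (hper : ∀ t θ : ℝ, v (t, θ + 2 * Real.pi) = v (t, θ))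
    (t θ : ℝ) : D1 v (t, θ + 2 * Real.pi) = D1 v (t, θ) := by
  unfold D1; rw [fderiv_per hreg hper (t, θ)]

lemma D2_per (hreg : ContDiff ℝ 2 v) (hper : ∀ t θ : ℝ, v (t, θ + 2 * Real.pi) = v (t, θ))
    (t θ : ℝ) : D2 v (t, θ + 2 * Real.pi) = D2 v (t, θ) := by
  unfold D2; rw [fderiv_per hreg hper (t, θ)]

/-- differentiation under the interval integral, for jointly continuous data -/
lemma param_deriv (F G : ℝ × ℝ → ℝ) (hF : Continuous F) (hG : Continuous G)
    (hd : ∀ p : ℝ × ℝ, HasDerivAt (fun s => F (s, p.2)) (G p) p.1) (t : ℝ) :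
    HasDerivAt (fun τ => ∫ θ in (0:ℝ)..(2*Real.pi), F (τ, θ))
      (∫ θ in (0:ℝ)..(2*Real.pi), G (t, θ)) t := by
  have hK : IsCompact (Icc (t-1) (t+1) ×ˢ Icc (0:ℝ) (2*Real.pi)) :=
    isCompact_Icc.prod isCompact_Icc
  obtain ⟨M, hM⟩ := hK.exists_bound_of_continuousOn hG.continuousOn
  have hsub : Set.uIoc (0:ℝ) (2*Real.pi) ⊆ Icc (0:ℝ) (2*Real.pi) := by
    rw [uIoc_of_le (by positivity)]
    exact Ioc_subset_Icc_self
  have main := intervalIntegral.hasDerivAt_integral_of_dominated_loc_of_deriv_le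
    (F := fun x θ => F (x, θ)) (F' := fun x θ => G (x, θ)) (x₀ := t)
    (a := (0:ℝ)) (b := 2*Real.pi) (μ := volume) (bound := fun _ => M)
    (s := Metric.ball t 1) (Metric.ball_mem_nhds t one_pos)
    (Filter.Eventually.of_forall fun x =>
      ((hF.comp (continuous_const.prodMk continuous_id)).aestronglyMeasurable))
    ((hF.comp (continuous_const.prodMk continuous_id)).intervalIntegrable _ _)
    ((hG.comp (continuous_const.prodMk continuous_id)).aestronglyMeasurable)
    (Filter.Eventually.of_forall fun θ hθ x hx => by
      have hx' : x ∈ Icc (t-1) (t+1) := by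
        have := Metric.mem_ball.mp hx
        rw [Real.dist_eq] at this
        constructor <;> [linarith [abs_lt.mp this]; linarith [abs_lt.mp this]]
      exact hM (x, θ) (mk_mem_prod hx' (hsub hθ)))
    (intervalIntegrable_const)
    (Filter.Eventually.of_forall fun θ hθ x hx => hd (x, θ))
  exact main.2

/-- a continuous nonnegative function with zero integral vanishes on the interval -/
lemma zero_of_integral_zero (g : ℝ → ℝ) (hg : Continuous g) (h0 : ∀ x, 0 ≤ g x)
    (hz : ∫ x in (0:ℝ)..(2*Real.pi), g x = 0) : ∀ x ∈ Icc (0:ℝ) (2*Real.pi), g x = 0 := by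
  have h2π : (0:ℝ) < 2*Real.pi := by positivity
  have hae := (intervalIntegral.integral_eq_zero_iff_of_le_of_nonneg_ae h2π.le
    (Filter.Eventually.of_forall fun x => h0 x)
    ((hg.intervalIntegrable _ _))).mp hz
  -- g = 0 a.e. on Ioc 0 2π; continuity forces g = 0 on Ioo, then on Icc
  have hIoo : EqOn g 0 (Ioo (0:ℝ) (2*Real.pi)) := by
    intro x hx
    by_contra hne
    have hpos : 0 < g x := lt_of_le_of_ne (h0 x) (Ne.symm (by simpa using hne))
    obtain ⟨δ, hδpos, hδ⟩ := Metric.continuousAt_iff.mp hg.continuousAt (g x / 2) (by linarith)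
    -- on (x-δ, x+δ) ∩ Ioo, g > g x / 2 > 0, contradicting ae zero
    set s := Ioo (max 0 (x - δ)) (min (2*Real.pi) (x + δ)) with hs
    have hsne : (max 0 (x - δ)) < (min (2*Real.pi) (x + δ)) := by
      rcases hx with ⟨h1, h2⟩
      simp only [max_lt_iff, lt_min_iff]
      constructor <;> constructor <;> linarith
    have hsub2 : s ⊆ {y | g y ≠ 0} ∩ Ioc 0 (2*Real.pi) := by
      intro y hy
      rcases hy with ⟨hy1, hy2⟩
      have hclose : |y - x| < δ := by
        have := max_lt_iff.mp (show max 0 (x-δ) < y from hy1)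
        have := lt_min_iff.mp (show y < min (2*Real.pi) (x+δ) from hy2)
        rw [abs_sub_lt_iff]; constructor <;> linarith [hy1, hy2,
          (max_lt_iff.mp hy1).2, (lt_min_iff.mp hy2).2]
      have := hδ (by rwa [Real.dist_eq])
      rw [Real.dist_eq] at this
      have hgy : g x / 2 < g y := by
        have := abs_lt.mp this; linarith
      constructor
      · intro h; rw [h] at hgy; linarith
      · exact ⟨lt_of_le_of_lt (le_max_left _ _) hy1,
          le_of_lt (lt_of_lt_of_le hy2 (min_le_left _ _))⟩
    have hmes : volume ({y | g y ≠ 0} ∩ Ioc 0 (2*Real.pi)) = 0 := by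
      have h1 := ae_iff.mp hae
      rw [Measure.restrict_apply (by
        exact (isOpen_ne_fun hg continuous_const).measurableSet)] at h1
      simpa using h1
    have : volume s = 0 := measure_mono_null hsub2 hmes
    rw [hs, Real.volume_Ioo] at this
    simp only [ENNReal.ofReal_eq_zero] at this
    linarith [hsne]
  have hclosure : EqOn g 0 (closure (Ioo (0:ℝ) (2*Real.pi))) :=
    hIoo.closure hg continuous_const
  rw [closure_Ioo (by positivity : (0:ℝ) ≠ 2*Real.pi)] at hclosure
  exact fun x hx => hclosure hx

/-- extend vanishing from a period to all of ℝ -/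
lemma zero_of_periodic (g : ℝ → ℝ) (hp : ∀ x, g (x + 2*Real.pi) = g x)
    (h : ∀ x ∈ Icc (0:ℝ) (2*Real.pi), g x = 0) : ∀ x, g x = 0 := by
  have hper : Function.Periodic g (2*Real.pi) := hp
  intro x
  have h2π : (0:ℝ) < 2*Real.pi := by positivity
  obtain ⟨n, hn⟩ : ∃ n : ℤ, x - n * (2*Real.pi) ∈ Ico 0 (2*Real.pi) := by
    refine ⟨⌊x / (2*Real.pi)⌋, ?_, ?_⟩
    · have := Int.sub_floor_div_mul_nonneg x h2π
      linarith [this]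
    · have := Int.sub_floor_div_mul_lt x h2π
      linarith [this]
  have := hper.sub_int_mul_eq (x := x) n
  rw [← this]
  exact h _ ⟨hn.1, hn.2.le⟩

noncomputable def ee (v : ℝ × ℝ → ℝ) (p : ℝ × ℝ) : ℝ :=
  -(1/2) * (D1 v p)^2 + (1/2) * (D2 v p)^2 - (v p)^2 + (1/2) * (v p)^4

noncomputable def Ge (v : ℝ × ℝ → ℝ) (p : ℝ × ℝ) : ℝ :=
  Bv v p (0,1) (0,1) * D1 v p + D2 v p * Bv v p (0,1) (1,0)

lemma cont_ee (hreg : ContDiff ℝ 2 v) : Continuous (ee v) := by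
  unfold ee
  exact (((continuous_const.mul ((cont_D1 hreg).pow 2)).add
    (continuous_const.mul ((cont_D2 hreg).pow 2))).sub ((cont_v hreg).pow 2)).add
    (continuous_const.mul ((cont_v hreg).pow 4))

lemma cont_Ge (hreg : ContDiff ℝ 2 v) : Continuous (Ge v) := by
  unfold Ge
  exact ((cont_B hreg (0,1) (0,1)).mul (cont_D1 hreg)).add
    ((cont_D2 hreg).mul (cont_B hreg (0,1) (1,0)))

lemma pde' (hreg : ContDiff ℝ 2 v) (hpde : ∀ p : ℝ × ℝ, -lap v p = 2 * v p * (1 - (v p) ^ 2))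
    (p : ℝ × ℝ) :
    Bv v p (1,0) (1,0) + Bv v p (0,1) (0,1) = -(2 * v p * (1 - (v p)^2)) := by
  have h := hpde p
  rw [show -lap v p = -(Bv v p (1,0) (1,0) + Bv v p (0,1) (0,1)) by rw [lap_eq hreg]] at h
  linarith

lemma ee_deriv_t (hreg : ContDiff ℝ 2 v)
    (hpde : ∀ p : ℝ × ℝ, -lap v p = 2 * v p * (1 - (v p) ^ 2)) (p : ℝ × ℝ) :
    HasDerivAt (fun s => ee v (s, p.2)) (Ge v p) p.1 := by
  have h1 : HasDerivAt (fun s => D1 v (s, p.2)) (Bv v p (1,0) (1,0)) p.1 := DT hreg (1,0) p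
  have h2 : HasDerivAt (fun s => D2 v (s, p.2)) (Bv v p (1,0) (0,1)) p.1 := DT hreg (0,1) p
  have h0 : HasDerivAt (fun s => v (s, p.2)) (D1 v p) p.1 := sliceT hreg p
  have hA := ((((h1.pow 2).const_mul (-(1/2))).add ((h2.pow 2).const_mul (1/2))).sub
    (h0.pow 2)).add ((h0.pow 4).const_mul (1/2))
  have hfun : (fun s => ee v (s, p.2)) = (fun x => -(1/2) * D1 v (x, p.2)^2
      + 1/2 * D2 v (x, p.2)^2 - v (x, p.2)^2 + 1/2 * v (x, p.2)^4) := rfl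
  rw [hfun]
  refine hA.congr_deriv ?_
  symm
  have hsym := Bsymm hreg p (1,0) (0,1)
  have hp := pde' hreg hpde p
  unfold Ge
  simp only [Prod.mk.eta]
  push_cast
  ring_nf
  linear_combination (D1 v p) * hp - (D2 v p) * hsym

lemma Ge_int_zero (hreg : ContDiff ℝ 2 v)
    (hper : ∀ t θ : ℝ, v (t, θ + 2 * Real.pi) = v (t, θ)) (t : ℝ) :
    ∫ θ in (0:ℝ)..(2*Real.pi), Ge v (t, θ) = 0 := by
  have hφ : ∀ θ ∈ uIcc (0:ℝ) (2*Real.pi),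
      HasDerivAt (fun s => D2 v (t, s) * D1 v (t, s)) (Ge v (t, θ)) θ := by
    intro θ _
    exact (Dθ hreg (0,1) (t,θ)).mul (Dθ hreg (1,0) (t,θ))
  have hint : IntervalIntegrable (fun θ => Ge v (t, θ)) volume 0 (2*Real.pi) :=
    ((cont_Ge hreg).comp (continuous_const.prodMk continuous_id)).intervalIntegrable _ _
  rw [intervalIntegral.integral_eq_sub_of_hasDerivAt hφ hint]
  have e1 : D2 v (t, 2*Real.pi) = D2 v (t, 0) := by
    have := D2_per hreg hper t 0; simpa using this
  have e2 : D1 v (t, 2*Real.pi) = D1 v (t, 0) := by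
    have := D1_per hreg hper t 0; simpa using this
  rw [e1, e2]; ring

noncomputable def En (v : ℝ × ℝ → ℝ) (t : ℝ) : ℝ := ∫ θ in (0:ℝ)..(2*Real.pi), ee v (t, θ)

lemma En_hasDeriv (hreg : ContDiff ℝ 2 v)
    (hpde : ∀ p : ℝ × ℝ, -lap v p = 2 * v p * (1 - (v p) ^ 2))
    (hper : ∀ t θ : ℝ, v (t, θ + 2 * Real.pi) = v (t, θ)) (t : ℝ) :
    HasDerivAt (En v) 0 t := by
  have := param_deriv (ee v) (Ge v) (cont_ee hreg) (cont_Ge hreg)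
    (fun p => ee_deriv_t hreg hpde p) t
  rwa [Ge_int_zero hreg hper t] at this

lemma En_const (hreg : ContDiff ℝ 2 v)
    (hpde : ∀ p : ℝ × ℝ, -lap v p = 2 * v p * (1 - (v p) ^ 2))
    (hper : ∀ t θ : ℝ, v (t, θ + 2 * Real.pi) = v (t, θ)) (s t : ℝ) :
    En v s = En v t :=
  is_const_of_deriv_eq_zero (fun x => (En_hasDeriv hreg hpde hper x).differentiableAt)
    (fun x => (En_hasDeriv hreg hpde hper x).deriv) s t

lemma D1_at_sym (hreg : ContDiff ℝ 2 v) (Λ : ℝ)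
    (hsym : ∀ t θ : ℝ, v (t, θ) = v (2 * Λ - t, θ)) (θ : ℝ) : D1 v (Λ, θ) = 0 := by
  have hf : HasDerivAt (fun s => v (s, θ)) (D1 v (Λ, θ)) Λ := sliceT hreg (Λ, θ)
  have hinner : HasDerivAt (fun s : ℝ => 2 * Λ - s) (-1) Λ := by
    have := ((hasDerivAt_const Λ (2 * Λ)).sub (hasDerivAt_id Λ))
    simp at this
    exact this
  have hg : HasDerivAt (fun s => v (2 * Λ - s, θ)) (D1 v (2 * Λ - Λ, θ) * (-1)) Λ :=
    by have := HasDerivAt.comp Λ (sliceT hreg (2 * Λ - Λ, θ)) hinner; exact this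
  have heq : (fun s => v (s, θ)) = (fun s => v (2 * Λ - s, θ)) := funext fun s => hsym s θ
  rw [← heq] at hg
  have huniq := hf.unique hg
  have h2 : (2 * Λ - Λ) = Λ := by ring
  rw [h2] at huniq
  linarith

lemma En_lambda (hreg : ContDiff ℝ 2 v)
    (hpde : ∀ p : ℝ × ℝ, -lap v p = 2 * v p * (1 - (v p) ^ 2))
    (hper : ∀ t θ : ℝ, v (t, θ + 2 * Real.pi) = v (t, θ))
    (hbdd : ∀ p : ℝ × ℝ, |v p| ≤ 1)
    (hlim : ∀ ε > (0 : ℝ), ∃ T : ℝ, ∀ t ≥ T, ∀ θ : ℝ, |v (t, θ) - 1| < ε)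
    (hlimt : ∀ ε > (0 : ℝ), ∃ T : ℝ, ∀ t ≥ T, ∀ θ : ℝ, |pdt v (t, θ)| < ε)
    (hlimθ : ∀ ε > (0 : ℝ), ∃ T : ℝ, ∀ t ≥ T, ∀ θ : ℝ, |pdθ v (t, θ)| < ε)
    (Λ : ℝ) : En v Λ = -Real.pi := by
  by_contra hne
  set x := En v Λ + Real.pi with hx
  have hxne : x ≠ 0 := by
    intro h; apply hne; rw [hx] at h; linarith
  have hxpos : 0 < |x| := abs_pos.mpr hxne
  set ε := |x| / 2 with hε
  have hεpos : 0 < ε := by positivity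
  set δ := min 1 (ε / 30) with hδ
  have hδpos : 0 < δ := lt_min one_pos (by positivity)
  have hδ1 : δ ≤ 1 := min_le_left _ _
  have hδ2 : δ ≤ ε / 30 := min_le_right _ _
  obtain ⟨T₁, h₁⟩ := hlim δ hδpos
  obtain ⟨T₂, h₂⟩ := hlimt δ hδpos
  obtain ⟨T₃, h₃⟩ := hlimθ δ hδpos
  set T := max T₁ (max T₂ T₃) with hT
  have hT1 : T₁ ≤ T := le_max_left _ _
  have hT2 : T₂ ≤ T := le_trans (le_max_left _ _) (le_max_right _ _)
  have hT3 : T₃ ≤ T := le_trans (le_max_right _ _) (le_max_right _ _)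
  have hpt : ∀ θ : ℝ, |ee v (T, θ) + 1/2| ≤ 3 * δ^2 := by
    intro θ
    have hv := h₁ T hT1 θ
    have hd1 := h₂ T hT2 θ
    have hd2 := h₃ T hT3 θ
    rw [pdt_eq hreg] at hd1
    rw [pdθ_eq hreg] at hd2
    have hb := hbdd (T, θ)
    have hb' := abs_le.mp hb
    have hv' := abs_lt.mp hv
    have hd1' := abs_lt.mp hd1
    have hd2' := abs_lt.mp hd2
    have h5 : (v (T, θ) - 1)^2 ≤ δ^2 := sq_le_sq' (by linarith) (by linarith)
    have h6 : (v (T, θ) + 1)^2 ≤ 2^2 := sq_le_sq' (by linarith) (by linarith)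
    have h7 : ((v (T, θ))^2 - 1)^2 ≤ δ^2 * 2^2 := by
      have hrw : ((v (T, θ))^2 - 1)^2 = (v (T, θ) - 1)^2 * (v (T, θ) + 1)^2 := by ring
      rw [hrw]
      exact mul_le_mul h5 h6 (sq_nonneg _) (sq_nonneg _)
    have h8 : (D1 v (T, θ))^2 ≤ δ^2 := sq_le_sq' (by linarith) (by linarith)
    have h9 : (D2 v (T, θ))^2 ≤ δ^2 := sq_le_sq' (by linarith) (by linarith)
    rw [abs_le]
    unfold ee
    constructor <;> [nlinarith [sq_nonneg (D1 v (T,θ)), sq_nonneg (D2 v (T,θ)),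
      sq_nonneg ((v (T,θ))^2 - 1)]; nlinarith [sq_nonneg (D1 v (T,θ)),
      sq_nonneg (D2 v (T,θ)), sq_nonneg ((v (T,θ))^2 - 1)]]
  have h2π : (0:ℝ) ≤ 2 * Real.pi := by positivity
  have hcontT : Continuous (fun θ => ee v (T, θ)) :=
    (cont_ee hreg).comp (continuous_const.prodMk continuous_id)
  have heq1 : ∫ θ in (0:ℝ)..(2*Real.pi), (ee v (T, θ) + 1/2) = En v T + Real.pi := by
    rw [intervalIntegral.integral_add (hcontT.intervalIntegrable _ _) intervalIntegrable_const,
      intervalIntegral.integral_const]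
    show En v T + (2 * Real.pi - 0) • (1/2 : ℝ) = En v T + Real.pi
    rw [smul_eq_mul]; ring
  have hboundT : |En v T + Real.pi| ≤ 6 * Real.pi * δ^2 := by
    rw [← heq1]
    calc |∫ θ in (0:ℝ)..(2*Real.pi), (ee v (T, θ) + 1/2)|
        ≤ ∫ θ in (0:ℝ)..(2*Real.pi), |ee v (T, θ) + 1/2| :=
          intervalIntegral.abs_integral_le_integral_abs h2π
      _ ≤ ∫ θ in (0:ℝ)..(2*Real.pi), (3 * δ^2 : ℝ) := by
          apply intervalIntegral.integral_mono_on h2π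
            ((hcontT.add continuous_const).abs.intervalIntegrable _ _)
            intervalIntegrable_const
          intro θ _
          exact hpt θ
      _ = 6 * Real.pi * δ^2 := by
          rw [intervalIntegral.integral_const, smul_eq_mul]; ring
  have hEnT : En v T = En v Λ := En_const hreg hpde hper T Λ
  rw [hEnT] at hboundT
  have hπ4 : Real.pi ≤ 4 := by linarith [Real.pi_le_four]
  have : |x| ≤ 24 * δ^2 := by
    calc |x| = |En v Λ + Real.pi| := by rw [hx]
      _ ≤ 6 * Real.pi * δ^2 := hboundT
      _ ≤ 24 * δ^2 := by nlinarith [sq_nonneg δ]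
  have : |x| ≤ 24 * δ * δ := by nlinarith
  have hfin : |x| ≤ 24 * (ε / 30) := by nlinarith
  rw [hε] at hfin
  linarith

lemma B22_int_zero (hreg : ContDiff ℝ 2 v)
    (hper : ∀ t θ : ℝ, v (t, θ + 2 * Real.pi) = v (t, θ)) (t : ℝ) :
    ∫ θ in (0:ℝ)..(2*Real.pi), Bv v (t, θ) (0,1) (0,1) = 0 := by
  have hφ : ∀ θ ∈ uIcc (0:ℝ) (2*Real.pi),
      HasDerivAt (fun s => D2 v (t, s)) (Bv v (t, θ) (0,1) (0,1)) θ :=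
    fun θ _ => Dθ hreg (0,1) (t, θ)
  rw [intervalIntegral.integral_eq_sub_of_hasDerivAt hφ
    (((cont_B hreg (0,1) (0,1)).comp
      (continuous_const.prodMk continuous_id)).intervalIntegrable _ _)]
  have := D2_per hreg hper t 0
  simp only [zero_add] at this
  rw [this, sub_self]

lemma z_argument (hreg : ContDiff ℝ 2 v)
    (hpde : ∀ p : ℝ × ℝ, -lap v p = 2 * v p * (1 - (v p) ^ 2))
    (hper : ∀ t θ : ℝ, v (t, θ + 2 * Real.pi) = v (t, θ))
    (hbdd : ∀ p : ℝ × ℝ, |v p| ≤ 1)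
    (c : ℝ) (hc2 : c ^ 2 = 1) (Λ : ℝ)
    (hvΛ : ∀ θ : ℝ, v (Λ, θ) = c) (hD1Λ : ∀ θ : ℝ, D1 v (Λ, θ) = 0) :
    ∀ q : ℝ × ℝ, v q = c := by
  have h2π : (0:ℝ) < 2 * Real.pi := by positivity
  set w : ℝ × ℝ → ℝ := fun q => 1 - c * v q with hw
  set G1 : ℝ × ℝ → ℝ := fun q => -(c * D1 v q) with hG1
  set G2 : ℝ × ℝ → ℝ := fun q => -(c * Bv v q (1,0) (1,0)) with hG2
  have hwcont : Continuous w := continuous_const.sub (continuous_const.mul (cont_v hreg))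
  have hG1cont : Continuous G1 := (continuous_const.mul (cont_D1 hreg)).neg
  have hG2cont : Continuous G2 := (continuous_const.mul (cont_B hreg (1,0) (1,0))).neg
  set z : ℝ → ℝ := fun t => ∫ θ in (0:ℝ)..(2*Real.pi), w (t, θ) with hz
  set z1 : ℝ → ℝ := fun t => ∫ θ in (0:ℝ)..(2*Real.pi), G1 (t, θ) with hz1
  set z2 : ℝ → ℝ := fun t => ∫ θ in (0:ℝ)..(2*Real.pi), G2 (t, θ) with hz2
  have hdw : ∀ p : ℝ × ℝ, HasDerivAt (fun s => w (s, p.2)) (G1 p) p.1 := by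
    intro p
    have h1 := ((sliceT hreg p).const_mul c)
    have h2 := (hasDerivAt_const p.1 (1:ℝ)).sub h1
    simp [hw, hG1] at h2; exact h2
  have hdG1 : ∀ p : ℝ × ℝ, HasDerivAt (fun s => G1 (s, p.2)) (G2 p) p.1 := by
    intro p
    have h1 := ((DT hreg (1,0) p).const_mul c).neg
    exact h1
  have hzd : ∀ t, HasDerivAt z (z1 t) t := fun t => param_deriv w G1 hwcont hG1cont hdw t
  have hz1d : ∀ t, HasDerivAt z1 (z2 t) t := fun t => param_deriv G1 G2 hG1cont hG2cont hdG1 t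
  have hwnn : ∀ q : ℝ × ℝ, 0 ≤ w q := by
    intro q
    have hb := abs_le.mp (hbdd q)
    have hcpm : c = 1 ∨ c = -1 := by
      have : (c - 1) * (c + 1) = 0 := by nlinarith
      rcases mul_eq_zero.mp this with h | h
      · left; linarith
      · right; linarith
    rcases hcpm with h | h <;> rw [hw] <;> simp only [h] <;> nlinarith
  have hznn : ∀ t, 0 ≤ z t := by
    intro t
    exact intervalIntegral.integral_nonneg h2π.le (fun θ _ => hwnn (t, θ))
  have hzΛ : z Λ = 0 := by
    have hint : ∀ θ ∈ uIcc (0:ℝ) (2*Real.pi), w (Λ, θ) = 0 := by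
      intro θ _
      rw [hw]
      simp only
      rw [hvΛ θ]
      nlinarith
    rw [hz]
    simp only
    rw [intervalIntegral.integral_congr hint]
    simp
  have hz1Λ : z1 Λ = 0 := by
    have hint : ∀ θ ∈ uIcc (0:ℝ) (2*Real.pi), G1 (Λ, θ) = 0 := by
      intro θ _
      rw [hG1]
      simp only
      rw [hD1Λ θ]
      ring
    rw [hz1]
    simp only
    rw [intervalIntegral.integral_congr hint]
    simp
  -- the bound |z2 t| ≤ 4 * z t
  have hz2eq : ∀ t, z2 t = ∫ θ in (0:ℝ)..(2*Real.pi),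
      (2 * c * v (t, θ) * (1 - (v (t, θ))^2) + c * Bv v (t, θ) (0,1) (0,1)) := by
    intro t
    rw [hz2]
    simp only
    apply intervalIntegral.integral_congr
    intro θ _
    have hp := pde' hreg hpde (t, θ)
    rw [hG2]
    simp only
    linear_combination (-c) * hp
  have hz2eq2 : ∀ t, z2 t = ∫ θ in (0:ℝ)..(2*Real.pi),
      2 * c * v (t, θ) * (1 - (v (t, θ))^2) := by
    intro t
    rw [hz2eq t]
    have hcont1 : Continuous (fun θ => 2 * c * v (t, θ) * (1 - (v (t, θ))^2)) := by
      have hv : Continuous (fun θ => v (t, θ)) :=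
        (cont_v hreg).comp (continuous_const.prodMk continuous_id)
      continuity
    have hcont2 : Continuous (fun θ => Bv v (t, θ) (0,1) (0,1)) :=
      (cont_B hreg (0,1) (0,1)).comp (continuous_const.prodMk continuous_id)
    rw [intervalIntegral.integral_add (hcont1.intervalIntegrable _ _)
      ((by exact continuous_const.mul hcont2 : Continuous (fun θ => c * Bv v (t, θ) (0,1) (0,1))).intervalIntegrable _ _),
      intervalIntegral.integral_const_mul, B22_int_zero hreg hper t, mul_zero, add_zero]
  have hptb : ∀ q : ℝ × ℝ, |2 * c * v q * (1 - (v q)^2)| ≤ 4 * w q := by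
    intro q
    have hb := abs_le.mp (hbdd q)
    have hcpm : c = 1 ∨ c = -1 := by
      have : (c - 1) * (c + 1) = 0 := by nlinarith
      rcases mul_eq_zero.mp this with h | h
      · left; linarith
      · right; linarith
    rw [abs_le, hw]
    rcases hcpm with h | h <;> subst h <;> simp only
    · have k1 : 0 ≤ (1 - v q) * ((1 - v q) * (v q + 2)) :=
        mul_nonneg (by linarith) (mul_nonneg (by linarith) (by linarith))
      have k2 : 0 ≤ (1 - v q) * (v q ^ 2 + v q + 2) :=
        mul_nonneg (by linarith) (by nlinarith [sq_nonneg (2 * v q + 1)])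
      constructor <;> nlinarith [k1, k2]
    · have k1 : 0 ≤ (1 + v q) * ((1 + v q) * (2 - v q)) :=
        mul_nonneg (by linarith) (mul_nonneg (by linarith) (by linarith))
      have k2 : 0 ≤ (1 + v q) * (v q ^ 2 - v q + 2) :=
        mul_nonneg (by linarith) (by nlinarith [sq_nonneg (2 * v q - 1)])
      constructor <;> nlinarith [k1, k2]
  have hz2b : ∀ t, |z2 t| ≤ 4 * z t := by
    intro t
    rw [hz2eq2 t]
    have hcont1 : Continuous (fun θ => 2 * c * v (t, θ) * (1 - (v (t, θ))^2)) := by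
      have hv : Continuous (fun θ => v (t, θ)) :=
        (cont_v hreg).comp (continuous_const.prodMk continuous_id)
      continuity
    calc |∫ θ in (0:ℝ)..(2*Real.pi), 2 * c * v (t, θ) * (1 - (v (t, θ))^2)|
        ≤ ∫ θ in (0:ℝ)..(2*Real.pi), |2 * c * v (t, θ) * (1 - (v (t, θ))^2)| :=
          intervalIntegral.abs_integral_le_integral_abs h2π.le
      _ ≤ ∫ θ in (0:ℝ)..(2*Real.pi), 4 * w (t, θ) := by
          apply intervalIntegral.integral_mono_on h2π.le
            (hcont1.abs.intervalIntegrable _ _)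
            ((continuous_const.mul
              (hwcont.comp (continuous_const.prodMk continuous_id))).intervalIntegrable _ _)
          intro θ _
          exact hptb (t, θ)
      _ = 4 * z t := by
          rw [intervalIntegral.integral_const_mul]
  -- Gronwall
  set y : ℝ → ℝ := fun t => (z1 t)^2 + 4 * (z t)^2 with hy
  have hyd : ∀ t, HasDerivAt y (2 * z1 t * z2 t + 8 * z t * z1 t) t := by
    intro t
    have h := ((hz1d t).pow 2).add (((hzd t).pow 2).const_mul 4)
    refine h.congr_deriv ?_
    push_cast
    ring
  have hynn : ∀ t, 0 ≤ y t := by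
    intro t; rw [hy]; positivity
  have hyΛ : y Λ = 0 := by
    rw [hy]; simp only; rw [hzΛ, hz1Λ]; ring
  have hydb : ∀ t, |2 * z1 t * z2 t + 8 * z t * z1 t| ≤ 4 * y t := by
    intro t
    have h1 := abs_le.mp (hz2b t)
    have h2 := hznn t
    have e1 : |2 * z1 t * z2 t| ≤ 2 * |z1 t| * (4 * z t) := by
      rw [abs_mul, abs_mul]
      have : |(2:ℝ)| = 2 := by norm_num
      rw [this]
      apply mul_le_mul_of_nonneg_left _ (by positivity)
      · exact hz2b t
    have e2 : |8 * z t * z1 t| = 8 * z t * |z1 t| := by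
      rw [abs_mul, abs_mul]
      rw [abs_of_nonneg h2]
      norm_num
    have e3 : 4 * z t * |z1 t| ≤ (z1 t)^2 + 4 * (z t)^2 := by
      nlinarith [sq_nonneg (|z1 t| - 2 * z t), sq_abs (z1 t)]
    calc |2 * z1 t * z2 t + 8 * z t * z1 t|
        ≤ |2 * z1 t * z2 t| + |8 * z t * z1 t| := abs_add_le _ _
      _ ≤ 2 * |z1 t| * (4 * z t) + 8 * z t * |z1 t| := by rw [e2]; linarith
      _ = 4 * (4 * z t * |z1 t|) := by ring
      _ ≤ 4 * ((z1 t)^2 + 4 * (z t)^2) := by linarith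
      _ = 4 * y t := by rw [hy]
  -- forward
  have hfor : ∀ t, Λ ≤ t → y t = 0 := by
    intro t ht
    set hfun : ℝ → ℝ := fun s => y s * Real.exp (-(4 * s)) with hhf
    have hed : ∀ s : ℝ, HasDerivAt (fun s : ℝ => Real.exp (-(4 * s)))
        (Real.exp (-(4 * s)) * (-4)) s := by
      intro s
      have hi : HasDerivAt (fun s : ℝ => -(4 * s)) (-4) s := by
        have := ((hasDerivAt_id s).const_mul (4:ℝ)).neg
        simp at this
        exact this
      exact hi.exp
    have hhd : ∀ s, HasDerivAt hfun
        ((2 * z1 s * z2 s + 8 * z s * z1 s) * Real.exp (-(4 * s))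
          + y s * (Real.exp (-(4 * s)) * (-4))) s :=
      fun s => (hyd s).mul (hed s)
    have hanti : Antitone hfun := by
      apply antitone_of_deriv_nonpos
      · exact fun s => (hhd s).differentiableAt
      · intro s
        rw [(hhd s).deriv]
        have hb := abs_le.mp (hydb s)
        have hexp := Real.exp_pos (-(4 * s))
        nlinarith [hb.2]
    have h1 : hfun t ≤ hfun Λ := hanti ht
    have h2 : hfun Λ = 0 := by rw [hhf]; simp only; rw [hyΛ]; ring
    have h3 : 0 ≤ hfun t := by
      rw [hhf]; simp only
      positivity
    have h4 : hfun t = 0 := le_antisymm (h2 ▸ h1) h3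
    rw [hhf] at h4
    simp only at h4
    have hexp := Real.exp_pos (-(4 * t))
    rcases mul_eq_zero.mp h4 with h | h
    · exact h
    · exact absurd h (ne_of_gt hexp)
  -- backward
  have hback : ∀ t, t ≤ Λ → y t = 0 := by
    intro t ht
    set hfun : ℝ → ℝ := fun s => y s * Real.exp (4 * s) with hhf
    have hed : ∀ s : ℝ, HasDerivAt (fun s : ℝ => Real.exp (4 * s))
        (Real.exp (4 * s) * 4) s := by
      intro s
      have hi : HasDerivAt (fun s : ℝ => 4 * s) (4:ℝ) s := by
        have := ((hasDerivAt_id s).const_mul (4:ℝ))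
        simp at this
        exact this
      exact hi.exp
    have hhd : ∀ s, HasDerivAt hfun
        ((2 * z1 s * z2 s + 8 * z s * z1 s) * Real.exp (4 * s)
          + y s * (Real.exp (4 * s) * 4)) s :=
      fun s => (hyd s).mul (hed s)
    have hmono : Monotone hfun := by
      apply monotone_of_deriv_nonneg
      · exact fun s => (hhd s).differentiableAt
      · intro s
        rw [(hhd s).deriv]
        have hb := abs_le.mp (hydb s)
        have hexp := Real.exp_pos (4 * s)
        nlinarith [hb.1]
    have h1 : hfun t ≤ hfun Λ := hmono ht
    have h2 : hfun Λ = 0 := by rw [hhf]; simp only; rw [hyΛ]; ring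
    have h3 : 0 ≤ hfun t := by
      rw [hhf]; simp only
      positivity
    have h4 : hfun t = 0 := le_antisymm (h2 ▸ h1) h3
    rw [hhf] at h4
    simp only at h4
    have hexp := Real.exp_pos (4 * t)
    rcases mul_eq_zero.mp h4 with h | h
    · exact h
    · exact absurd h (ne_of_gt hexp)
  have hyall : ∀ t, y t = 0 := by
    intro t
    rcases le_total Λ t with h | h
    · exact hfor t h
    · exact hback t h
  have hzall : ∀ t, z t = 0 := by
    intro t
    have := hyall t
    rw [hy] at this
    simp only at this
    nlinarith [sq_nonneg (z1 t), sq_nonneg (z t), hznn t]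
  -- conclude
  intro q
  obtain ⟨t, θ⟩ := q
  have hwt : ∀ x ∈ Icc (0:ℝ) (2*Real.pi), w (t, x) = 0 := by
    apply zero_of_integral_zero _ (hwcont.comp (continuous_const.prodMk continuous_id))
      (fun x => hwnn (t, x))
    exact hzall t
  have hwper : ∀ x, w (t, x + 2*Real.pi) = w (t, x) := by
    intro x
    rw [hw]
    simp only
    rw [hper t x]
  have hw0 := zero_of_periodic _ hwper hwt θ
  rw [hw] at hw0
  simp only at hw0
  linear_combination (-c) * hw0 - v (t, θ) * hc2

end Stmt16Aux

open Stmt16Aux in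
theorem stmt16 (v : ℝ × ℝ → ℝ) (hreg : ContDiff ℝ 2 v)
    (hpde : ∀ p : ℝ × ℝ, -lap v p = 2 * v p * (1 - (v p) ^ 2))
    (hper : ∀ t θ : ℝ, v (t, θ + 2 * Real.pi) = v (t, θ))
    (hbdd : ∀ p : ℝ × ℝ, |v p| ≤ 1)
    (hlim : ∀ ε > (0 : ℝ), ∃ T : ℝ, ∀ t ≥ T, ∀ θ : ℝ, |v (t, θ) - 1| < ε)
    (hlimt : ∀ ε > (0 : ℝ), ∃ T : ℝ, ∀ t ≥ T, ∀ θ : ℝ, |pdt v (t, θ)| < ε)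
    (hlimθ : ∀ ε > (0 : ℝ), ∃ T : ℝ, ∀ t ≥ T, ∀ θ : ℝ, |pdθ v (t, θ)| < ε)
    (Λ : ℝ) (hsym : ∀ t θ : ℝ, v (t, θ) = v (2 * Λ - t, θ)) :
    ∀ p : ℝ × ℝ, v p = 1 := by
  have h2π : (0:ℝ) < 2 * Real.pi := by positivity
  have hD1Λ : ∀ θ : ℝ, D1 v (Λ, θ) = 0 := D1_at_sym hreg Λ hsym
  have hEnΛ : En v Λ = -Real.pi := En_lambda hreg hpde hper hbdd hlim hlimt hlimθ Λ
  set g : ℝ → ℝ := fun θ => 1/2 * (D2 v (Λ, θ))^2 + 1/2 * ((v (Λ, θ))^2 - 1)^2 with hgdef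
  have hgcont : Continuous g := by
    apply Continuous.add
    · exact continuous_const.mul
        (((cont_D2 hreg).comp (continuous_const.prodMk continuous_id)).pow 2)
    · exact continuous_const.mul
        (((((cont_v hreg).comp (continuous_const.prodMk continuous_id)).pow 2).sub
          continuous_const).pow 2)
  have hgnn : ∀ x, 0 ≤ g x := fun x => by rw [hgdef]; positivity
  have hgint : ∫ θ in (0:ℝ)..(2*Real.pi), g θ = 0 := by
    have hcongr : ∀ θ ∈ uIcc (0:ℝ) (2*Real.pi), g θ = ee v (Λ, θ) + 1/2 := by
      intro θ _
      rw [hgdef]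
      simp only
      unfold Stmt16Aux.ee
      rw [hD1Λ θ]
      ring
    have hceΛ : Continuous (fun θ => ee v (Λ, θ)) :=
      (cont_ee hreg).comp (continuous_const.prodMk continuous_id)
    rw [intervalIntegral.integral_congr hcongr,
      intervalIntegral.integral_add (hceΛ.intervalIntegrable _ _) intervalIntegrable_const,
      intervalIntegral.integral_const]
    have hEn : (∫ θ in (0:ℝ)..(2*Real.pi), ee v (Λ, θ)) = En v Λ := rfl
    rw [hEn, hEnΛ, smul_eq_mul]
    ring
  have hgIcc := zero_of_integral_zero g hgcont hgnn hgint
  have hgper : ∀ x, g (x + 2*Real.pi) = g x := by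
    intro x
    rw [hgdef]
    simp only
    rw [D2_per hreg hper Λ x, hper Λ x]
  have hg0 := zero_of_periodic g hgper hgIcc
  have hsq : ∀ θ : ℝ, (v (Λ, θ))^2 = 1 := by
    intro θ
    have hv0 := hg0 θ
    rw [hgdef] at hv0
    simp only at hv0
    nlinarith [sq_nonneg (D2 v (Λ, θ)), sq_nonneg ((v (Λ, θ))^2 - 1)]
  set c := v (Λ, 0) with hcdef
  have hc2 : c ^ 2 = 1 := hsq 0
  have hcpm : c = 1 ∨ c = -1 := by
    have h1 : (c - 1) * (c + 1) = 0 := by nlinarith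
    rcases mul_eq_zero.mp h1 with h | h
    · left; linarith
    · right; linarith
  have hvΛ : ∀ θ : ℝ, v (Λ, θ) = c := by
    intro θ
    by_contra hne
    have hθ2 := hsq θ
    have hvneg : v (Λ, θ) = -c := by
      have h1 : (v (Λ, θ) - c) * (v (Λ, θ) + c) = 0 := by nlinarith
      rcases mul_eq_zero.mp h1 with h | h
      · exact absurd (by linarith) hne
      · linarith
    have hcontf : ContinuousOn (fun s => v (Λ, s)) (uIcc 0 θ) :=
      ((cont_v hreg).comp (continuous_const.prodMk continuous_id)).continuousOn
    have h0mem : (0:ℝ) ∈ uIcc (v (Λ, 0)) (v (Λ, θ)) := by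
      rw [← hcdef, hvneg]
      rcases hcpm with h | h <;> rw [h] <;> simp [Set.mem_uIcc] <;> norm_num
    obtain ⟨θs, _, hθs⟩ := intermediate_value_uIcc hcontf h0mem
    have hs2 := hsq θs
    rw [show v (Λ, θs) = 0 from hθs] at hs2
    norm_num at hs2
  have hvc := z_argument hreg hpde hper hbdd c hc2 Λ hvΛ hD1Λ
  obtain ⟨T, hT⟩ := hlim 1 one_pos
  have hT0 := hT T (le_refl T) 0
  rw [hvc (T, 0)] at hT0
  have hc1 : c = 1 := by
    rcases hcpm with h | h
    · exact h
    · rw [h] at hT0; norm_num at hT0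
  intro p
  rw [hvc p, hc1]
end

section
/- Suppose u is a bounded classical solution of -Δu = (2/|x|²)·u·(1-u²) on ℝ²\{0}, continuous on ℝ², with u(0) = 0. Then u ≡ 0 on ℝ². -/
open Real MeasureTheory intervalIntegral Set

/-- If `f' ≤ g'` on `[a,b]`, then `f b - f a ≤ g b - g a`. -/
lemma mono_aux {f g f' g' : ℝ → ℝ} (hf : ∀ x, HasDerivAt f (f' x) x)
    (hg : ∀ x, HasDerivAt g (g' x) x) {a b : ℝ} (hab : a ≤ b)
    (h : ∀ x, a ≤ x → x ≤ b → f' x ≤ g' x) : f b - f a ≤ g b - g a := by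
  have hmono : MonotoneOn (fun x => g x - f x) (Icc a b) := by
    apply monotoneOn_of_deriv_nonneg (convex_Icc a b)
    · exact (Continuous.sub
        (continuous_iff_continuousAt.mpr fun s => (hg s).continuousAt)
        (continuous_iff_continuousAt.mpr fun s => (hf s).continuousAt)).continuousOn
    · intro x hx
      exact ((hg x).sub (hf x)).differentiableAt.differentiableWithinAt
    · intro x hx
      rw [interior_Icc] at hx
      rw [((hg x).fun_sub (hf x)).deriv]
      linarith [h x hx.1.le hx.2.le]
  have := hmono ⟨le_refl a, hab⟩ ⟨hab, le_refl b⟩ hab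
  simp only at this
  linarith

/-- Differentiation under the interval integral for continuous data. -/
lemma hasDerivAt_integral_cont {G G' : ℝ → ℝ → ℝ} {a b : ℝ}
    (hG'c : Continuous fun p : ℝ × ℝ => G' p.1 p.2)
    (hGc : ∀ t, Continuous (G t))
    (hd : ∀ t θ, HasDerivAt (fun s => G s θ) (G' t θ) t) (t₀ : ℝ) :
    HasDerivAt (fun t => ∫ θ in a..b, G t θ) (∫ θ in a..b, G' t₀ θ) t₀ := by
  have hK : IsCompact (Icc (t₀ - 1) (t₀ + 1) ×ˢ uIcc a b) :=
    (isCompact_Icc).prod isCompact_uIcc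
  obtain ⟨C, hC⟩ := hK.exists_bound_of_continuousOn hG'c.continuousOn
  have hint : IntervalIntegrable (G t₀) volume a b := (hGc t₀).intervalIntegrable a b
  have hmeas : ∀ᶠ x in nhds t₀, AEStronglyMeasurable (G x) (volume.restrict (Set.uIoc a b)) :=
    Filter.Eventually.of_forall fun t => ((hGc t).aestronglyMeasurable).restrict
  have hG't₀ : Continuous (G' t₀) := hG'c.comp (by fun_prop : Continuous fun θ : ℝ => (t₀, θ))
  have main := intervalIntegral.hasDerivAt_integral_of_dominated_loc_of_deriv_le
    (F := G) (F' := G') (x₀ := t₀) (a := a) (b := b) (bound := fun _ => C)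
    (μ := volume) (s := Metric.ball t₀ 1) (Metric.ball_mem_nhds t₀ one_pos) hmeas hint hG't₀.aestronglyMeasurable.restrict
    (Filter.Eventually.of_forall fun θ hθ x hx => by
      have hx' : |x - t₀| < 1 := by rw [← Real.dist_eq]; exact Metric.mem_ball.mp hx
      have h1 := (abs_lt.mp hx').1
      have h2 := (abs_lt.mp hx').2
      have : (x, θ) ∈ Icc (t₀ - 1) (t₀ + 1) ×ˢ uIcc a b := by
        refine ⟨⟨by simp; linarith, by simp; linarith⟩, uIoc_subset_uIcc hθ⟩
      simpa using hC _ this)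
    (intervalIntegrable_const)
    (Filter.Eventually.of_forall fun θ hθ x hx => hd x θ)
  exact main.2

/-- A function on ℝ, bounded above, with second derivative ≥ c > 0 on (-∞, T], is impossible. -/
lemma no_bounded_strongly_convex {φ φ' φ'' : ℝ → ℝ} {T c M : ℝ}
    (h1 : ∀ t, HasDerivAt φ (φ' t) t) (h2 : ∀ t, HasDerivAt φ' (φ'' t) t)
    (hc : 0 < c) (hcc : ∀ t ≤ T, c ≤ φ'' t) (hM : ∀ t, φ t ≤ M) : False := by
  -- step 1 : φ' t ≤ φ' T - c * (T - t) for t ≤ T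
  have step1 : ∀ t ≤ T, φ' t ≤ φ' T - c * (T - t) := by
    intro t ht
    have := mono_aux (f := fun s => c * s) (g := φ') (f' := fun _ => c) (g' := φ'')
      (fun x => (hasDerivAt_id x).const_mul c |>.congr_deriv (mul_one c))
      h2 ht (fun x _ hx => hcc x hx)
    have h' : c * T - c * t ≤ φ' T - φ' t := this
    linarith
  -- step 2 : φ t ≥ φ T - φ' T * (T - t) + c*(T-t)^2/2 for t ≤ T
  have step2 : ∀ t ≤ T, φ T - φ' T * (T - t) + c * (T - t)^2 / 2 ≤ φ t := by
    intro t ht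
    have hψd : ∀ s, HasDerivAt (fun s => φ' T * s + c * (T - s)^2 / 2)
        (φ' T - c * (T - s)) s := by
      intro s
      have ha : HasDerivAt (fun s : ℝ => T - s) (-1) s := by
        simpa using (hasDerivAt_const s T).fun_sub (hasDerivAt_id s)
      have hb : HasDerivAt (fun s : ℝ => (T - s)^2) (2 * (T - s) * (-1)) s := by
        simpa using ha.fun_pow 2
      have := (((hasDerivAt_id s).const_mul (φ' T)).fun_add ((hb.const_mul c).div_const 2))
      refine this.congr_deriv ?_
      ring
    have := mono_aux (f := φ) (g := fun s => φ' T * s + c * (T - s)^2 / 2)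
      (f' := φ') (g' := fun s => φ' T - c * (T - s)) h1 hψd ht
      (fun x _ hx => by simpa using step1 x hx)
    have h' : φ T - φ t ≤ (φ' T * T + c * (T - T)^2 / 2) - (φ' T * t + c * (T - t)^2 / 2) := this
    nlinarith [h']
  -- step 3 : contradiction by taking t very negative
  set s : ℝ := max 1 ((|φ' T| + |M + 1 - φ T|) * 2 / c) with hs
  have hs1 : 1 ≤ s := le_max_left _ _
  have hs2 : (|φ' T| + |M + 1 - φ T|) * 2 / c ≤ s := le_max_right _ _
  have hs2' : (|φ' T| + |M + 1 - φ T|) * 2 ≤ c * s := by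
    rw [div_le_iff₀ hc] at hs2; linarith
  have key := step2 (T - s) (by linarith)
  have e1 : T - (T - s) = s := by ring
  rw [e1] at key
  have habs1 : φ' T ≤ |φ' T| := le_abs_self _
  have habs2 : M + 1 - φ T ≤ |M + 1 - φ T| := le_abs_self _
  have : M + 1 ≤ φ T - φ' T * s + c * s^2 / 2 := by nlinarith [abs_nonneg (φ' T), abs_nonneg (M + 1 - φ T)]
  linarith [hM (T - s), key]

/-- A bounded function on ℝ whose second derivative is nonnegative has zero derivative. -/
lemma deriv_zero_of_bounded_convex {φ φ' φ'' : ℝ → ℝ} {M : ℝ}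
    (h1 : ∀ t, HasDerivAt φ (φ' t) t) (h2 : ∀ t, HasDerivAt φ' (φ'' t) t)
    (hcc : ∀ t, 0 ≤ φ'' t) (hM : ∀ t, |φ t| ≤ M) : ∀ t, φ' t = 0 := by
  have hmono : Monotone φ' := by
    refine monotone_of_deriv_nonneg (fun t => (h2 t).differentiableAt) (fun t => ?_)
    rw [(h2 t).deriv]; exact hcc t
  intro t
  by_contra hne
  have hMpos : 0 ≤ M := le_trans (abs_nonneg _) (hM t)
  have hq : 0 ≤ M + 1 + |φ t| := by linarith [abs_nonneg (φ t)]
  rcases lt_or_gt_of_ne hne with hneg | hpos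
  · -- φ' t < 0 : going to -∞, φ grows without bound
    have hst : t + (M + 1 + |φ t|) / φ' t ≤ t := by
      have : (M + 1 + |φ t|) / φ' t ≤ 0 := div_nonpos_of_nonneg_of_nonpos hq hneg.le
      linarith
    set s : ℝ := t + (M + 1 + |φ t|) / φ' t with hsdef
    have key2 := mono_aux (f := φ) (g := fun r => φ' t * r)
      (f' := φ') (g' := fun _ => φ' t) h1
      (fun x => (hasDerivAt_id x).const_mul (φ' t) |>.congr_deriv (mul_one _))
      hst (fun x _ hx => hmono hx)
    have key2' : φ t - φ s ≤ φ' t * t - φ' t * s := key2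
    have hval : φ' t * s - φ' t * t = M + 1 + |φ t| := by
      rw [hsdef]; field_simp; ring
    linarith [key2', hval, (abs_le.mp (hM s)).2, neg_abs_le (φ t)]
  · -- φ' t > 0 : going to +∞
    have hst : t ≤ t + (M + 1 + |φ t|) / φ' t := by
      have : 0 ≤ (M + 1 + |φ t|) / φ' t := div_nonneg hq hpos.le
      linarith
    set s : ℝ := t + (M + 1 + |φ t|) / φ' t with hsdef
    have key2 := mono_aux (f := fun r => φ' t * r) (g := φ)
      (f' := fun _ => φ' t) (g' := φ')
      (fun x => (hasDerivAt_id x).const_mul (φ' t) |>.congr_deriv (mul_one _))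
      h1 hst (fun x hx _ => hmono hx)
    have key2' : φ' t * s - φ' t * t ≤ φ s - φ t := key2
    have hval : φ' t * s - φ' t * t = M + 1 + |φ t| := by
      rw [hsdef]; field_simp; ring
    linarith [key2', hval, (abs_le.mp (hM s)).2, neg_abs_le (φ t)]


open Real MeasureTheory intervalIntegral Set

noncomputable section

def Phi (t θ : ℝ) : ℝ × ℝ := (Real.exp t * Real.cos θ, Real.exp t * Real.sin θ)
def Psi (t θ : ℝ) : ℝ × ℝ := (-(Real.exp t * Real.sin θ), Real.exp t * Real.cos θ)
def D1 (u : ℝ × ℝ → ℝ) (p : ℝ × ℝ) := fderiv ℝ u p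
def D2 (u : ℝ × ℝ → ℝ) (p : ℝ × ℝ) := fderiv ℝ (fderiv ℝ u) p
def VV (u : ℝ × ℝ → ℝ) (t θ : ℝ) : ℝ := u (Phi t θ)
def Vt (u : ℝ × ℝ → ℝ) (t θ : ℝ) : ℝ := D1 u (Phi t θ) (Phi t θ)
def Vq (u : ℝ × ℝ → ℝ) (t θ : ℝ) : ℝ := D1 u (Phi t θ) (Psi t θ)
def Vtt (u : ℝ × ℝ → ℝ) (t θ : ℝ) : ℝ := D2 u (Phi t θ) (Phi t θ) (Phi t θ) + Vt u t θ
def Vqq (u : ℝ × ℝ → ℝ) (t θ : ℝ) : ℝ := D2 u (Phi t θ) (Psi t θ) (Psi t θ) - Vt u t θ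
def Vtq (u : ℝ × ℝ → ℝ) (t θ : ℝ) : ℝ := D2 u (Phi t θ) (Psi t θ) (Phi t θ) + Vq u t θ

lemma Phi_ne_zero (t θ : ℝ) : Phi t θ ≠ 0 := by
  intro h
  have h1 : Real.exp t * Real.cos θ = 0 := congrArg Prod.fst h
  have h2 : Real.exp t * Real.sin θ = 0 := congrArg Prod.snd h
  have he := Real.exp_pos t
  have hc : Real.cos θ = 0 := by
    rcases mul_eq_zero.mp h1 with h | h
    · linarith
    · exact h
  have hs : Real.sin θ = 0 := by
    rcases mul_eq_zero.mp h2 with h | h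
    · linarith
    · exact h
  have := Real.sin_sq_add_cos_sq θ
  rw [hc, hs] at this; norm_num at this

lemma hasDerivAt_Phi_t (t θ : ℝ) : HasDerivAt (fun t => Phi t θ) (Phi t θ) t := by
  apply HasDerivAt.prodMk
  · simpa using ((Real.hasDerivAt_exp t).mul_const (Real.cos θ))
  · simpa using ((Real.hasDerivAt_exp t).mul_const (Real.sin θ))

lemma hasDerivAt_Phi_q (t θ : ℝ) : HasDerivAt (fun θ => Phi t θ) (Psi t θ) θ := by
  apply HasDerivAt.prodMk
  · simpa [mul_comm] using ((Real.hasDerivAt_cos θ).const_mul (Real.exp t))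
  · simpa [mul_comm] using ((Real.hasDerivAt_sin θ).const_mul (Real.exp t))

lemma hasDerivAt_Psi_t (t θ : ℝ) : HasDerivAt (fun t => Psi t θ) (Psi t θ) t := by
  apply HasDerivAt.prodMk
  · simpa using (((Real.hasDerivAt_exp t).mul_const (Real.sin θ)).fun_neg)
  · simpa using ((Real.hasDerivAt_exp t).mul_const (Real.cos θ))

lemma hasDerivAt_Psi_q (t θ : ℝ) : HasDerivAt (fun θ => Psi t θ) (-(Phi t θ)) θ := by
  apply HasDerivAt.prodMk
  · have := ((Real.hasDerivAt_sin θ).const_mul (Real.exp t)).fun_neg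
    simpa [mul_comm, Phi] using this
  · have := ((Real.hasDerivAt_cos θ).const_mul (Real.exp t))
    simpa [mul_comm, Phi] using this

lemma continuous_PhiF : Continuous fun p : ℝ × ℝ => Phi p.1 p.2 := by
  unfold Phi; fun_prop

lemma continuous_PsiF : Continuous fun p : ℝ × ℝ => Psi p.1 p.2 := by
  unfold Psi; fun_prop

section withu
variable {u : ℝ × ℝ → ℝ} (hreg : ContDiffOn ℝ 2 u {x : ℝ × ℝ | x ≠ 0})

lemma isOpen_ne0 : IsOpen {x : ℝ × ℝ | x ≠ 0} := isOpen_ne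

include hreg

lemma contDiffAt_u {p : ℝ × ℝ} (hp : p ≠ 0) : ContDiffAt ℝ 2 u p :=
  hreg.contDiffAt (isOpen_ne0.mem_nhds hp)

lemma hasfd1 {p : ℝ × ℝ} (hp : p ≠ 0) : HasFDerivAt u (D1 u p) p :=
  ((contDiffAt_u hreg hp).differentiableAt (by norm_num)).hasFDerivAt

lemma hasfd2 {p : ℝ × ℝ} (hp : p ≠ 0) : HasFDerivAt (fderiv ℝ u) (D2 u p) p := by
  have h1 : ContDiffAt ℝ 1 (fderiv ℝ u) p :=
    (contDiffAt_u hreg hp).fderiv_right (by norm_num)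
  exact (h1.differentiableAt (by norm_num)).hasFDerivAt

lemma symmD2 {p : ℝ × ℝ} (hp : p ≠ 0) (v w : ℝ × ℝ) : D2 u p v w = D2 u p w v :=
  (contDiffAt_u hreg hp).isSymmSndFDerivAt (by norm_num) v w

lemma contD1 : ContinuousOn (D1 u) {x : ℝ × ℝ | x ≠ 0} :=
  hreg.continuousOn_fderiv_of_isOpen isOpen_ne0 (by norm_num)

lemma contD2 : ContinuousOn (D2 u) {x : ℝ × ℝ | x ≠ 0} := by
  have h1 : ContDiffOn ℝ 1 (fderiv ℝ u) {x : ℝ × ℝ | x ≠ 0} :=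
    hreg.fderiv_of_isOpen isOpen_ne0 (by norm_num)
  exact h1.continuousOn_fderiv_of_isOpen isOpen_ne0 (by norm_num)

-- derivatives of V in t
lemma hasDerivAt_VV_t (t θ : ℝ) : HasDerivAt (fun t => VV u t θ) (Vt u t θ) t :=
  (hasfd1 hreg (Phi_ne_zero t θ)).comp_hasDerivAt t (hasDerivAt_Phi_t t θ)

lemma hasDerivAt_VV_q (t θ : ℝ) : HasDerivAt (fun θ => VV u t θ) (Vq u t θ) θ :=
  (hasfd1 hreg (Phi_ne_zero t θ)).comp_hasDerivAt θ (hasDerivAt_Phi_q t θ)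

lemma hasDerivAt_Vt_t (t θ : ℝ) : HasDerivAt (fun t => Vt u t θ) (Vtt u t θ) t := by
  have hc : HasDerivAt (fun t => D1 u (Phi t θ)) (D2 u (Phi t θ) (Phi t θ)) t :=
    (hasfd2 hreg (Phi_ne_zero t θ)).comp_hasDerivAt t (hasDerivAt_Phi_t t θ)
  have := hc.clm_apply (hasDerivAt_Phi_t t θ)
  simpa [Vtt, Vt] using this

lemma hasDerivAt_Vt_q (t θ : ℝ) : HasDerivAt (fun θ => Vt u t θ) (Vtq u t θ) θ := by
  have hc : HasDerivAt (fun θ => D1 u (Phi t θ)) (D2 u (Phi t θ) (Psi t θ)) θ :=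
    (hasfd2 hreg (Phi_ne_zero t θ)).comp_hasDerivAt θ (hasDerivAt_Phi_q t θ)
  have := hc.clm_apply (hasDerivAt_Phi_q t θ)
  simpa [Vtq, Vq, Vt] using this

lemma hasDerivAt_Vq_t (t θ : ℝ) : HasDerivAt (fun t => Vq u t θ) (Vtq u t θ) t := by
  have hc : HasDerivAt (fun t => D1 u (Phi t θ)) (D2 u (Phi t θ) (Phi t θ)) t :=
    (hasfd2 hreg (Phi_ne_zero t θ)).comp_hasDerivAt t (hasDerivAt_Phi_t t θ)
  have := hc.clm_apply (hasDerivAt_Psi_t t θ)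
  have hsym : D2 u (Phi t θ) (Phi t θ) (Psi t θ) = D2 u (Phi t θ) (Psi t θ) (Phi t θ) :=
    symmD2 hreg (Phi_ne_zero t θ) _ _
  simp only [Vtq, Vq]
  rw [← hsym]; exact this

lemma hasDerivAt_Vq_q (t θ : ℝ) : HasDerivAt (fun θ => Vq u t θ) (Vqq u t θ) θ := by
  have hc : HasDerivAt (fun θ => D1 u (Phi t θ)) (D2 u (Phi t θ) (Psi t θ)) θ :=
    (hasfd2 hreg (Phi_ne_zero t θ)).comp_hasDerivAt θ (hasDerivAt_Phi_q t θ)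
  have := hc.clm_apply (hasDerivAt_Psi_q t θ)
  simp only [Vqq, Vt]
  refine this.congr_deriv ?_
  simp [sub_eq_add_neg]

end withu

section withu2
variable {u : ℝ × ℝ → ℝ} (hreg : ContDiffOn ℝ 2 u {x : ℝ × ℝ | x ≠ 0})
include hreg

-- joint continuity helpers
lemma contAt_D1_Phi : Continuous fun p : ℝ × ℝ => D1 u (Phi p.1 p.2) := by
  rw [continuous_iff_continuousAt]
  intro p
  exact ContinuousAt.comp (f := fun p : ℝ × ℝ => Phi p.1 p.2) (x := p)
    ((contD1 hreg).continuousAt (isOpen_ne0.mem_nhds (Phi_ne_zero p.1 p.2)))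
    continuous_PhiF.continuousAt

lemma contAt_D2_Phi : Continuous fun p : ℝ × ℝ => D2 u (Phi p.1 p.2) := by
  rw [continuous_iff_continuousAt]
  intro p
  exact ContinuousAt.comp (f := fun p : ℝ × ℝ => Phi p.1 p.2) (x := p)
    ((contD2 hreg).continuousAt (isOpen_ne0.mem_nhds (Phi_ne_zero p.1 p.2)))
    continuous_PhiF.continuousAt

lemma contVt : Continuous fun p : ℝ × ℝ => Vt u p.1 p.2 :=
  (contAt_D1_Phi hreg).clm_apply continuous_PhiF

lemma contVq : Continuous fun p : ℝ × ℝ => Vq u p.1 p.2 :=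
  (contAt_D1_Phi hreg).clm_apply continuous_PsiF

lemma contVtt : Continuous fun p : ℝ × ℝ => Vtt u p.1 p.2 :=
  (((contAt_D2_Phi hreg).clm_apply continuous_PhiF).clm_apply continuous_PhiF).add (contVt hreg)

lemma contVqq : Continuous fun p : ℝ × ℝ => Vqq u p.1 p.2 :=
  (((contAt_D2_Phi hreg).clm_apply continuous_PsiF).clm_apply continuous_PsiF).sub (contVt hreg)

lemma contVtq : Continuous fun p : ℝ × ℝ => Vtq u p.1 p.2 :=
  (((contAt_D2_Phi hreg).clm_apply continuous_PsiF).clm_apply continuous_PhiF).add (contVq hreg)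

end withu2

-- bilinear expansion
lemma bilin_expand (B : (ℝ × ℝ) →L[ℝ] (ℝ × ℝ) →L[ℝ] ℝ) (t θ : ℝ) :
    B (Phi t θ) (Phi t θ) + B (Psi t θ) (Psi t θ)
      = Real.exp t ^ 2 * (B (1, 0) (1, 0) + B (0, 1) (0, 1)) := by
  have hPhi : Phi t θ = (Real.exp t * Real.cos θ) • ((1 : ℝ), (0 : ℝ))
      + (Real.exp t * Real.sin θ) • ((0 : ℝ), (1 : ℝ)) := by
    simp [Phi, Prod.ext_iff]
  have hPsi : Psi t θ = (-(Real.exp t * Real.sin θ)) • ((1 : ℝ), (0 : ℝ))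
      + (Real.exp t * Real.cos θ) • ((0 : ℝ), (1 : ℝ)) := by
    simp [Psi, Prod.ext_iff]
  rw [hPhi, hPsi]
  simp only [map_add, _root_.map_smul, ContinuousLinearMap.add_apply,
    ContinuousLinearMap.coe_smul', Pi.smul_apply, smul_eq_mul]
  have h := Real.sin_sq_add_cos_sq θ
  linear_combination (Real.exp t ^ 2 * ((B (1, 0)) (1, 0) + (B (0, 1)) (0, 1))) * h


section withu3
variable {u : ℝ × ℝ → ℝ} (hreg : ContDiffOn ℝ 2 u {x : ℝ × ℝ | x ≠ 0})
include hreg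

lemma lap_eq {p : ℝ × ℝ} (hp : p ≠ 0) :
    lap u p = D2 u p (1, 0) (1, 0) + D2 u p (0, 1) (0, 1) := by
  obtain ⟨p₁, p₂⟩ := p
  have hp' : ((p₁, p₂) : ℝ × ℝ) ≠ 0 := hp
  -- first slice
  have hS1 : IsOpen {s : ℝ | ((s, p₂) : ℝ × ℝ) ≠ 0} :=
    isOpen_ne0.preimage (by fun_prop)
  have hmem1 : p₁ ∈ {s : ℝ | ((s, p₂) : ℝ × ℝ) ≠ 0} := hp'
  have hcurve1 : ∀ s : ℝ, HasDerivAt (fun s : ℝ => ((s, p₂) : ℝ × ℝ)) (1, 0) s :=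
    fun s => (hasDerivAt_id s).prodMk (hasDerivAt_const s p₂)
  have hd1 : ∀ s ∈ {s : ℝ | ((s, p₂) : ℝ × ℝ) ≠ 0},
      HasDerivAt (fun s => u (s, p₂)) (D1 u (s, p₂) (1, 0)) s :=
    fun s hs => (hasfd1 hreg hs).comp_hasDerivAt s (hcurve1 s)
  have he1 : deriv (fun s => u (s, p₂)) =ᶠ[nhds p₁] fun s => D1 u (s, p₂) (1, 0) := by
    filter_upwards [hS1.mem_nhds hmem1] with s hs
    exact (hd1 s hs).deriv
  have hc1 : HasDerivAt (fun s : ℝ => D1 u (s, p₂)) (D2 u (p₁, p₂) (1, 0)) p₁ :=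
    (hasfd2 hreg hp').comp_hasDerivAt p₁ (hcurve1 p₁)
  have hg1 : HasDerivAt (fun s : ℝ => D1 u (s, p₂) (1, 0)) (D2 u (p₁, p₂) (1, 0) (1, 0)) p₁ := by
    have := hc1.clm_apply (hasDerivAt_const p₁ ((1 : ℝ), (0 : ℝ)))
    simpa using this
  have hslice1 : iteratedDeriv 2 (fun s => u (s, p₂)) p₁ = D2 u (p₁, p₂) (1, 0) (1, 0) := by
    rw [show (2 : ℕ) = 1 + 1 from rfl, iteratedDeriv_succ, iteratedDeriv_one]
    rw [he1.deriv_eq]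
    exact hg1.deriv
  -- second slice
  have hS2 : IsOpen {s : ℝ | ((p₁, s) : ℝ × ℝ) ≠ 0} :=
    isOpen_ne0.preimage (by fun_prop)
  have hmem2 : p₂ ∈ {s : ℝ | ((p₁, s) : ℝ × ℝ) ≠ 0} := hp'
  have hcurve2 : ∀ s : ℝ, HasDerivAt (fun s : ℝ => ((p₁, s) : ℝ × ℝ)) (0, 1) s :=
    fun s => (hasDerivAt_const s p₁).prodMk (hasDerivAt_id s)
  have hd2 : ∀ s ∈ {s : ℝ | ((p₁, s) : ℝ × ℝ) ≠ 0},
      HasDerivAt (fun s => u (p₁, s)) (D1 u (p₁, s) (0, 1)) s :=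
    fun s hs => (hasfd1 hreg hs).comp_hasDerivAt s (hcurve2 s)
  have he2 : deriv (fun s => u (p₁, s)) =ᶠ[nhds p₂] fun s => D1 u (p₁, s) (0, 1) := by
    filter_upwards [hS2.mem_nhds hmem2] with s hs
    exact (hd2 s hs).deriv
  have hc2 : HasDerivAt (fun s : ℝ => D1 u (p₁, s)) (D2 u (p₁, p₂) (0, 1)) p₂ :=
    (hasfd2 hreg hp').comp_hasDerivAt p₂ (hcurve2 p₂)
  have hg2 : HasDerivAt (fun s : ℝ => D1 u (p₁, s) (0, 1)) (D2 u (p₁, p₂) (0, 1) (0, 1)) p₂ := by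
    have := hc2.clm_apply (hasDerivAt_const p₂ ((0 : ℝ), (1 : ℝ)))
    simpa using this
  have hslice2 : iteratedDeriv 2 (fun s => u (p₁, s)) p₂ = D2 u (p₁, p₂) (0, 1) (0, 1) := by
    rw [show (2 : ℕ) = 1 + 1 from rfl, iteratedDeriv_succ, iteratedDeriv_one]
    rw [he2.deriv_eq]
    exact hg2.deriv
  simp only [lap]
  rw [hslice1, hslice2]

lemma V_pde
    (hpde : ∀ x : ℝ × ℝ, x ≠ 0 →
      -lap u x = (2 / (x.1 ^ 2 + x.2 ^ 2)) * u x * (1 - (u x) ^ 2)) (t θ : ℝ) :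
    Vtt u t θ + Vqq u t θ = -2 * VV u t θ * (1 - VV u t θ ^ 2) := by
  have hx := Phi_ne_zero t θ
  have hlap := lap_eq hreg hx
  have hsum : Vtt u t θ + Vqq u t θ = Real.exp t ^ 2 * lap u (Phi t θ) := by
    rw [hlap]
    have := bilin_expand (D2 u (Phi t θ)) t θ
    simp only [Vtt, Vqq]
    linarith [this]
  have hr : (Phi t θ).1 ^ 2 + (Phi t θ).2 ^ 2 = Real.exp t ^ 2 := by
    simp only [Phi]
    have := Real.sin_sq_add_cos_sq θ
    ring_nf
    nlinarith [this]
  have hp := hpde (Phi t θ) hx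
  rw [hr] at hp
  have hexp : Real.exp t ^ 2 ≠ 0 := by positivity
  rw [hsum]
  have : lap u (Phi t θ) = -((2 / Real.exp t ^ 2) * u (Phi t θ) * (1 - u (Phi t θ) ^ 2)) := by
    linarith [hp]
  rw [this]
  simp only [VV]
  field_simp

end withu3

lemma Phi_per (t θ : ℝ) : Phi t (θ + 2 * π) = Phi t θ := by
  simp [Phi, Real.cos_add_two_pi, Real.sin_add_two_pi]

lemma Psi_per (t θ : ℝ) : Psi t (θ + 2 * π) = Psi t θ := by
  simp [Psi, Real.cos_add_two_pi, Real.sin_add_two_pi]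

/-- periodic integration by parts on [0, 2π] -/
lemma ibp_per {f g f' g' : ℝ → ℝ} (hf : ∀ x, HasDerivAt f (f' x) x)
    (hg : ∀ x, HasDerivAt g (g' x) x)
    (hf'c : Continuous f') (hg'c : Continuous g')
    (hper : f (2 * π) * g (2 * π) = f 0 * g 0) :
    ∫ x in (0:ℝ)..(2 * π), f x * g' x = - ∫ x in (0:ℝ)..(2 * π), f' x * g x := by
  have h := intervalIntegral.integral_mul_deriv_eq_deriv_mul
    (fun x _ => hf x) (fun x _ => hg x)
    (hf'c.intervalIntegrable 0 (2 * π)) (hg'c.intervalIntegrable 0 (2 * π))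
  rw [h, hper]
  ring

lemma Phi_2pi (t : ℝ) : Phi t (2 * π) = Phi t 0 := by
  have := Phi_per t 0
  simpa using this

lemma Psi_2pi (t : ℝ) : Psi t (2 * π) = Psi t 0 := by
  have := Psi_per t 0
  simpa using this

def phiF (u : ℝ × ℝ → ℝ) (t : ℝ) : ℝ := ∫ θ in (0:ℝ)..(2 * π), (VV u t θ) ^ 2
def AF (u : ℝ × ℝ → ℝ) (t : ℝ) : ℝ := ∫ θ in (0:ℝ)..(2 * π), (Vt u t θ) ^ 2
def BF (u : ℝ × ℝ → ℝ) (t : ℝ) : ℝ := ∫ θ in (0:ℝ)..(2 * π), (Vq u t θ) ^ 2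
def DF (u : ℝ × ℝ → ℝ) (t : ℝ) : ℝ := ∫ θ in (0:ℝ)..(2 * π), (VV u t θ) ^ 4
def pF1 (u : ℝ × ℝ → ℝ) (t : ℝ) : ℝ := ∫ θ in (0:ℝ)..(2 * π), 2 * VV u t θ * Vt u t θ
def EF (u : ℝ × ℝ → ℝ) (t : ℝ) : ℝ := AF u t / 2 - BF u t / 2 + phiF u t - DF u t / 2

section withu4
variable {u : ℝ × ℝ → ℝ} (hreg : ContDiffOn ℝ 2 u {x : ℝ × ℝ | x ≠ 0})
    (hcont : Continuous u)
include hreg hcont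

lemma contVV : Continuous fun p : ℝ × ℝ => VV u p.1 p.2 := hcont.comp continuous_PhiF

-- value periodicity
lemma VV_2pi (t : ℝ) : VV u t (2 * π) = VV u t 0 := by unfold VV; rw [Phi_2pi]
lemma Vt_2pi (t : ℝ) : Vt u t (2 * π) = Vt u t 0 := by unfold Vt; rw [Phi_2pi]
lemma Vq_2pi (t : ℝ) : Vq u t (2 * π) = Vq u t 0 := by unfold Vq; rw [Phi_2pi, Psi_2pi]

lemma hasDerivAt_phiF (t : ℝ) : HasDerivAt (phiF u) (pF1 u t) t := by
  unfold phiF pF1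
  apply hasDerivAt_integral_cont (G := fun t θ => VV u t θ ^ 2)
    (G' := fun t θ => 2 * VV u t θ * Vt u t θ)
  · have h1 := contVV hreg hcont
    have h2 := contVt hreg
    fun_prop
  · intro t
    have h1 := (contVV hreg hcont).comp (Continuous.prodMk_right t)
    fun_prop
  · intro t θ
    have := (hasDerivAt_VV_t hreg t θ).fun_pow 2
    simpa [mul_comm, mul_assoc, mul_left_comm] using this

lemma hasDerivAt_pF1 (t : ℝ) :
    HasDerivAt (pF1 u) (∫ θ in (0:ℝ)..(2 * π),
      (2 * Vt u t θ ^ 2 + 2 * VV u t θ * Vtt u t θ)) t := by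
  unfold pF1
  apply hasDerivAt_integral_cont (G := fun t θ => 2 * VV u t θ * Vt u t θ)
    (G' := fun t θ => 2 * Vt u t θ ^ 2 + 2 * VV u t θ * Vtt u t θ)
  · have h1 := contVV hreg hcont
    have h2 := contVt hreg
    have h3 := contVtt hreg
    fun_prop
  · intro t
    have h1 := (contVV hreg hcont).comp (Continuous.prodMk_right t)
    have h2 := (contVt hreg).comp (Continuous.prodMk_right t)
    fun_prop
  · intro t θ
    have := ((hasDerivAt_VV_t hreg t θ).const_mul 2).fun_mul (hasDerivAt_Vt_t hreg t θ)
    refine this.congr_deriv ?_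
    ring

lemma hasDerivAt_AF (t : ℝ) :
    HasDerivAt (AF u) (∫ θ in (0:ℝ)..(2 * π), 2 * Vt u t θ * Vtt u t θ) t := by
  unfold AF
  apply hasDerivAt_integral_cont (G := fun t θ => Vt u t θ ^ 2)
    (G' := fun t θ => 2 * Vt u t θ * Vtt u t θ)
  · have h1 := contVt hreg
    have h2 := contVtt hreg
    fun_prop
  · intro t
    have h1 := (contVt hreg).comp (Continuous.prodMk_right t)
    fun_prop
  · intro t θ
    have := (hasDerivAt_Vt_t hreg t θ).fun_pow 2
    simpa [mul_comm, mul_assoc, mul_left_comm] using this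

lemma hasDerivAt_BF (t : ℝ) :
    HasDerivAt (BF u) (∫ θ in (0:ℝ)..(2 * π), 2 * Vq u t θ * Vtq u t θ) t := by
  unfold BF
  apply hasDerivAt_integral_cont (G := fun t θ => Vq u t θ ^ 2)
    (G' := fun t θ => 2 * Vq u t θ * Vtq u t θ)
  · have h1 := contVq hreg
    have h2 := contVtq hreg
    fun_prop
  · intro t
    have h1 := (contVq hreg).comp (Continuous.prodMk_right t)
    fun_prop
  · intro t θ
    have := (hasDerivAt_Vq_t hreg t θ).fun_pow 2
    simpa [mul_comm, mul_assoc, mul_left_comm] using this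

lemma hasDerivAt_DF (t : ℝ) :
    HasDerivAt (DF u) (∫ θ in (0:ℝ)..(2 * π), 4 * VV u t θ ^ 3 * Vt u t θ) t := by
  unfold DF
  apply hasDerivAt_integral_cont (G := fun t θ => VV u t θ ^ 4)
    (G' := fun t θ => 4 * VV u t θ ^ 3 * Vt u t θ)
  · have h1 := contVV hreg hcont
    have h2 := contVt hreg
    fun_prop
  · intro t
    have h1 := (contVV hreg hcont).comp (Continuous.prodMk_right t)
    fun_prop
  · intro t θ
    have := (hasDerivAt_VV_t hreg t θ).fun_pow 4
    simpa [mul_comm, mul_assoc, mul_left_comm] using this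

end withu4

section withu5
variable {u : ℝ × ℝ → ℝ} (hreg : ContDiffOn ℝ 2 u {x : ℝ × ℝ | x ≠ 0})
    (hcont : Continuous u)
include hreg hcont

-- fixed-t continuity of slices
lemma cVV (t : ℝ) : Continuous fun θ => VV u t θ := by
  have h := contVV hreg hcont
  fun_prop
lemma cVt (t : ℝ) : Continuous fun θ => Vt u t θ := by
  have h := contVt hreg
  fun_prop
lemma cVq (t : ℝ) : Continuous fun θ => Vq u t θ := by
  have h := contVq hreg
  fun_prop
lemma cVtt (t : ℝ) : Continuous fun θ => Vtt u t θ := by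
  have h := contVtt hreg
  fun_prop
lemma cVqq (t : ℝ) : Continuous fun θ => Vqq u t θ := by
  have h := contVqq hreg
  fun_prop
lemma cVtq (t : ℝ) : Continuous fun θ => Vtq u t θ := by
  have h := contVtq hreg
  fun_prop

lemma ibp1 (t : ℝ) :
    ∫ θ in (0:ℝ)..(2 * π), VV u t θ * Vqq u t θ = - BF u t := by
  have h := ibp_per (f := fun θ => VV u t θ) (g := fun θ => Vq u t θ)
    (f' := fun θ => Vq u t θ) (g' := fun θ => Vqq u t θ)
    (hasDerivAt_VV_q hreg t) (hasDerivAt_Vq_q hreg t)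
    (cVq hreg hcont t) (cVqq hreg hcont t)
    (by show VV u t (2 * π) * Vq u t (2 * π) = VV u t 0 * Vq u t 0
        rw [VV_2pi hreg hcont, Vq_2pi hreg hcont])
  rw [h]
  unfold BF
  congr 1
  apply intervalIntegral.integral_congr
  intro x _
  ring

lemma ibp2 (t : ℝ) :
    ∫ θ in (0:ℝ)..(2 * π), Vq u t θ * Vtq u t θ
      = - ∫ θ in (0:ℝ)..(2 * π), Vqq u t θ * Vt u t θ :=
  ibp_per (f := fun θ => Vq u t θ) (g := fun θ => Vt u t θ)
    (f' := fun θ => Vqq u t θ) (g' := fun θ => Vtq u t θ)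
    (hasDerivAt_Vq_q hreg t) (hasDerivAt_Vt_q hreg t)
    (cVqq hreg hcont t) (cVtq hreg hcont t)
    (by show Vq u t (2 * π) * Vt u t (2 * π) = Vq u t 0 * Vt u t 0
        rw [Vq_2pi hreg hcont, Vt_2pi hreg hcont])

lemma pF2_eq
    (hpde : ∀ x : ℝ × ℝ, x ≠ 0 →
      -lap u x = (2 / (x.1 ^ 2 + x.2 ^ 2)) * u x * (1 - (u x) ^ 2)) (t : ℝ) :
    ∫ θ in (0:ℝ)..(2 * π), (2 * Vt u t θ ^ 2 + 2 * VV u t θ * Vtt u t θ)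
      = 2 * AF u t + 2 * BF u t - 4 * phiF u t + 4 * DF u t := by
  have hil1 : IntervalIntegrable (fun θ => 2 * Vt u t θ ^ 2) volume 0 (2 * π) :=
    (by have := cVt hreg hcont t; fun_prop : Continuous fun θ => 2 * Vt u t θ ^ 2).intervalIntegrable _ _
  have hil2 : IntervalIntegrable (fun θ => 2 * VV u t θ * Vtt u t θ) volume 0 (2 * π) :=
    (by have := cVV hreg hcont t; have := cVtt hreg hcont t;
        fun_prop : Continuous fun θ => 2 * VV u t θ * Vtt u t θ).intervalIntegrable _ _
  rw [intervalIntegral.integral_add hil1 hil2]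
  -- second piece
  have hcg : ∀ θ, 2 * VV u t θ * Vtt u t θ
      = (-2) * (VV u t θ * Vqq u t θ) + (-4 * VV u t θ ^ 2 + 4 * VV u t θ ^ 4) := by
    intro θ
    have hpdeθ := V_pde hreg hpde t θ
    linear_combination 2 * VV u t θ * hpdeθ
  have hstep : (∫ θ in (0:ℝ)..(2 * π), 2 * VV u t θ * Vtt u t θ)
      = ∫ θ in (0:ℝ)..(2 * π),
          ((-2) * (VV u t θ * Vqq u t θ) + (-4 * VV u t θ ^ 2 + 4 * VV u t θ ^ 4)) :=
    intervalIntegral.integral_congr fun x _ => hcg x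
  have hi3 : IntervalIntegrable (fun θ => (-2) * (VV u t θ * Vqq u t θ)) volume 0 (2 * π) :=
    (by have := cVV hreg hcont t; have := cVqq hreg hcont t;
        fun_prop : Continuous fun θ => (-2) * (VV u t θ * Vqq u t θ)).intervalIntegrable _ _
  have hi4 : IntervalIntegrable (fun θ => -4 * VV u t θ ^ 2 + 4 * VV u t θ ^ 4) volume 0 (2 * π) :=
    (by have := cVV hreg hcont t;
        fun_prop : Continuous fun θ => -4 * VV u t θ ^ 2 + 4 * VV u t θ ^ 4).intervalIntegrable _ _
  have hi5 : IntervalIntegrable (fun θ => -4 * VV u t θ ^ 2) volume 0 (2 * π) :=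
    (by have := cVV hreg hcont t;
        fun_prop : Continuous fun θ => -4 * VV u t θ ^ 2).intervalIntegrable _ _
  have hi6 : IntervalIntegrable (fun θ => 4 * VV u t θ ^ 4) volume 0 (2 * π) :=
    (by have := cVV hreg hcont t;
        fun_prop : Continuous fun θ => 4 * VV u t θ ^ 4).intervalIntegrable _ _
  rw [hstep, intervalIntegral.integral_add hi3 hi4, intervalIntegral.integral_add hi5 hi6,
    intervalIntegral.integral_const_mul, intervalIntegral.integral_const_mul,
    intervalIntegral.integral_const_mul, intervalIntegral.integral_const_mul,
    ibp1 hreg hcont t]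
  unfold AF BF phiF DF
  ring

lemma EF_deriv
    (hpde : ∀ x : ℝ × ℝ, x ≠ 0 →
      -lap u x = (2 / (x.1 ^ 2 + x.2 ^ 2)) * u x * (1 - (u x) ^ 2)) (t : ℝ) :
    HasDerivAt (EF u) 0 t := by
  have hA := hasDerivAt_AF hreg hcont t
  have hB := hasDerivAt_BF hreg hcont t
  have hphi := hasDerivAt_phiF hreg hcont t
  have hD := hasDerivAt_DF hreg hcont t
  have h := (((hA.div_const 2).fun_sub (hB.div_const 2)).fun_add hphi).fun_sub (hD.div_const 2)
  have hEF : EF u = fun t => AF u t / 2 - BF u t / 2 + phiF u t - DF u t / 2 := rfl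
  rw [hEF]
  refine h.congr_deriv ?_; symm
  -- goal : 0 = (∫ 2VtVtt)/2 - (∫ 2VqVtq)/2 + (∫ 2V Vt) - (∫ 4V³Vt)/2
  have e2 := ibp2 hreg hcont t
  -- combine into a single integral
  have hiA : IntervalIntegrable (fun θ => 2 * Vt u t θ * Vtt u t θ) volume 0 (2 * π) :=
    (by have := cVt hreg hcont t; have := cVtt hreg hcont t;
        fun_prop : Continuous fun θ => 2 * Vt u t θ * Vtt u t θ).intervalIntegrable _ _
  have hiB : IntervalIntegrable (fun θ => Vqq u t θ * Vt u t θ) volume 0 (2 * π) :=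
    (by have := cVqq hreg hcont t; have := cVt hreg hcont t;
        fun_prop : Continuous fun θ => Vqq u t θ * Vt u t θ).intervalIntegrable _ _
  have hiphi : IntervalIntegrable (fun θ => 2 * VV u t θ * Vt u t θ) volume 0 (2 * π) :=
    (by have := cVV hreg hcont t; have := cVt hreg hcont t;
        fun_prop : Continuous fun θ => 2 * VV u t θ * Vt u t θ).intervalIntegrable _ _
  have hiD : IntervalIntegrable (fun θ => 4 * VV u t θ ^ 3 * Vt u t θ) volume 0 (2 * π) :=
    (by have := cVV hreg hcont t; have := cVt hreg hcont t;
        fun_prop : Continuous fun θ => 4 * VV u t θ ^ 3 * Vt u t θ).intervalIntegrable _ _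
  have eB : (∫ θ in (0:ℝ)..(2 * π), 2 * Vq u t θ * Vtq u t θ)
      = 2 * ∫ θ in (0:ℝ)..(2 * π), Vq u t θ * Vtq u t θ := by
    rw [← intervalIntegral.integral_const_mul]
    apply intervalIntegral.integral_congr
    intro x _
    ring
  rw [eB, e2]
  unfold pF1
  -- now everything is in terms of four integrals; assemble into one
  have key : (∫ θ in (0:ℝ)..(2 * π), 2 * Vt u t θ * Vtt u t θ) / 2
      - (2 * (- ∫ θ in (0:ℝ)..(2 * π), Vqq u t θ * Vt u t θ)) / 2
      + (∫ θ in (0:ℝ)..(2 * π), 2 * VV u t θ * Vt u t θ)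
      - (∫ θ in (0:ℝ)..(2 * π), 4 * VV u t θ ^ 3 * Vt u t θ) / 2
      = ∫ θ in (0:ℝ)..(2 * π),
          (2 * Vt u t θ * Vtt u t θ / 2 + Vqq u t θ * Vt u t θ
            + 2 * VV u t θ * Vt u t θ - 4 * VV u t θ ^ 3 * Vt u t θ / 2) := by
    rw [intervalIntegral.integral_sub (((hiA.div_const 2).add hiB).add hiphi) (hiD.div_const 2),
       intervalIntegral.integral_add ((hiA.div_const 2).add hiB) hiphi,
       intervalIntegral.integral_add (hiA.div_const 2) hiB,
       intervalIntegral.integral_div, intervalIntegral.integral_div]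
    ring
  rw [key]
  have hzero : ∀ θ, (2 * Vt u t θ * Vtt u t θ / 2 + Vqq u t θ * Vt u t θ
      + 2 * VV u t θ * Vt u t θ - 4 * VV u t θ ^ 3 * Vt u t θ / 2) = 0 := by
    intro θ
    have hpdeθ := V_pde hreg hpde t θ
    linear_combination Vt u t θ * hpdeθ
  rw [intervalIntegral.integral_congr (g := fun _ => (0:ℝ)) fun x _ => hzero x]
  simp

end withu5


theorem stmt18 (u : ℝ × ℝ → ℝ)
    (hreg : ContDiffOn ℝ 2 u {x : ℝ × ℝ | x ≠ 0})
    (hcont : Continuous u)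
    (hbdd : ∃ C : ℝ, ∀ x : ℝ × ℝ, |u x| ≤ C)
    (hpde : ∀ x : ℝ × ℝ, x ≠ 0 →
      -lap u x = (2 / (x.1 ^ 2 + x.2 ^ 2)) * u x * (1 - (u x) ^ 2))
    (h0 : u 0 = 0) :
    ∀ x : ℝ × ℝ, u x = 0 := by
  obtain ⟨C, hC⟩ := hbdd
  have hC0 : 0 ≤ C := le_trans (abs_nonneg _) (hC 0)
  have hVbd : ∀ t θ, |VV u t θ| ≤ C := fun t θ => hC _
  -- nonnegativity of the integral quantities
  have hphinn : ∀ t, 0 ≤ phiF u t := fun t =>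
    intervalIntegral.integral_nonneg (le_of_lt Real.two_pi_pos) (fun x _ => by positivity)
  have hAnn : ∀ t, 0 ≤ AF u t := fun t =>
    intervalIntegral.integral_nonneg (le_of_lt Real.two_pi_pos) (fun x _ => by positivity)
  have hBnn : ∀ t, 0 ≤ BF u t := fun t =>
    intervalIntegral.integral_nonneg (le_of_lt Real.two_pi_pos) (fun x _ => by positivity)
  have hDnn : ∀ t, 0 ≤ DF u t := fun t =>
    intervalIntegral.integral_nonneg (le_of_lt Real.two_pi_pos) (fun x _ => by positivity)
  -- upper bound for phiF given a uniform bound on VV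
  have hphile : ∀ (b : ℝ) (t : ℝ), 0 ≤ b → (∀ θ, |VV u t θ| ≤ b) → phiF u t ≤ 2 * π * b ^ 2 := by
    intro b t hb0 hb
    have hle : (∫ θ in (0:ℝ)..(2 * π), (VV u t θ) ^ 2)
        ≤ ∫ _ in (0:ℝ)..(2 * π), b ^ 2 := by
      apply intervalIntegral.integral_mono_on (le_of_lt Real.two_pi_pos)
      · exact ((cVV hreg hcont t).pow 2).intervalIntegrable _ _
      · exact intervalIntegrable_const
      · intro x _
        have h1 := abs_le.mp (hb x)
        nlinarith [h1.1, h1.2]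
    rw [intervalIntegral.integral_const, smul_eq_mul] at hle
    unfold phiF
    calc (∫ θ in (0:ℝ)..(2 * π), (VV u t θ) ^ 2) ≤ (2 * π - 0) * b ^ 2 := hle
      _ = 2 * π * b ^ 2 := by ring
  have hphiub : ∀ t, phiF u t ≤ 2 * π * C ^ 2 := fun t => hphile C t hC0 (hVbd t)
  have hphiabs : ∀ t, |phiF u t| ≤ 2 * π * C ^ 2 := by
    intro t
    have hnn : (0:ℝ) ≤ 2 * π * C ^ 2 :=
      mul_nonneg (le_of_lt Real.two_pi_pos) (sq_nonneg C)
    exact abs_le.mpr ⟨by linarith [hphinn t], hphiub t⟩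
  -- derivatives
  have hphi' : ∀ t, HasDerivAt (phiF u) (pF1 u t) t := hasDerivAt_phiF hreg hcont
  set pf2 : ℝ → ℝ := fun t => 2 * AF u t + 2 * BF u t - 4 * phiF u t + 4 * DF u t with hpf2
  have hphi'' : ∀ t, HasDerivAt (pF1 u) (pf2 t) t := by
    intro t
    have := hasDerivAt_pF1 hreg hcont t
    rwa [pF2_eq hreg hcont hpde t] at this
  -- energy is constant
  have hEconst : ∀ t, EF u t = EF u 0 := fun t =>
    is_const_of_deriv_eq_zero
      (fun s => (EF_deriv hreg hcont hpde s).differentiableAt)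
      (fun s => (EF_deriv hreg hcont hpde s).deriv) t 0
  set E0 : ℝ := EF u 0 with hE0
  have hEF_id : ∀ t, AF u t / 2 - BF u t / 2 + phiF u t - DF u t / 2 = E0 := by
    intro t
    have := hEconst t
    unfold EF at this
    linarith [this]
  -- uniform smallness of VV near -∞
  have hdecay : ∀ ε : ℝ, 0 < ε → ∃ T : ℝ, ∀ t ≤ T, ∀ θ, |VV u t θ| ≤ ε := by
    intro ε hε
    have hcont0 : ContinuousAt u 0 := hcont.continuousAt
    rw [Metric.continuousAt_iff] at hcont0
    obtain ⟨δ, hδ, hδ'⟩ := hcont0 ε hε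
    refine ⟨Real.log δ - 1, fun t ht θ => ?_⟩
    have hnorm : dist (Phi t θ) 0 < δ := by
      rw [dist_zero_right, Prod.norm_def]
      have h1 : ‖(Phi t θ).1‖ ≤ Real.exp t := by
        simp only [Phi, Real.norm_eq_abs, abs_mul, Real.abs_exp]
        calc Real.exp t * |Real.cos θ| ≤ Real.exp t * 1 := by
              have := Real.abs_cos_le_one θ
              nlinarith [Real.exp_pos t]
          _ = Real.exp t := by ring
      have h2 : ‖(Phi t θ).2‖ ≤ Real.exp t := by
        simp only [Phi, Real.norm_eq_abs, abs_mul, Real.abs_exp]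
        calc Real.exp t * |Real.sin θ| ≤ Real.exp t * 1 := by
              have := Real.abs_sin_le_one θ
              nlinarith [Real.exp_pos t]
          _ = Real.exp t := by ring
      have h3 : Real.exp t < δ := by
        calc Real.exp t ≤ Real.exp (Real.log δ - 1) := Real.exp_le_exp.mpr ht
          _ < Real.exp (Real.log δ) := Real.exp_lt_exp.mpr (by linarith)
          _ = δ := Real.exp_log hδ
      exact max_lt (lt_of_le_of_lt h1 h3) (lt_of_le_of_lt h2 h3)
    have := hδ' hnorm
    rw [h0, dist_zero_right, Real.norm_eq_abs] at this
    exact le_of_lt this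
  -- trichotomy on the energy
  rcases lt_trichotomy E0 0 with hneg | hzero | hpos
  · -- E0 < 0 : pf2 ≥ -4 E0 > 0 everywhere
    exfalso
    apply no_bounded_strongly_convex (φ := phiF u) (φ' := pF1 u) (φ'' := pf2)
      (T := 0) (c := -4 * E0) (M := 2 * π * C ^ 2) hphi' hphi''
      (by linarith) (fun t _ => ?_) hphiub
    have h1 := hEF_id t
    have h2 := hAnn t
    have h3 := hDnn t
    simp only [hpf2]
    linarith
  · -- E0 = 0 : phiF is convex and bounded, hence pF1 ≡ 0, hence DF ≡ 0
    have hpf2nn : ∀ t, 0 ≤ pf2 t := by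
      intro t
      have h1 := hEF_id t
      have h2 := hAnn t
      have h3 := hDnn t
      simp only [hpf2]
      linarith [hzero]
    have hpF1zero : ∀ t, pF1 u t = 0 :=
      deriv_zero_of_bounded_convex hphi' hphi'' hpf2nn hphiabs
    have hpf2zero : ∀ t, pf2 t = 0 := by
      intro t
      have h1 : pF1 u = fun _ => (0:ℝ) := funext hpF1zero
      have h2 := hphi'' t
      rw [h1] at h2
      exact (h2.unique (hasDerivAt_const t 0))
    have hDF0 : ∀ t, DF u t = 0 := by
      intro t
      have h1 := hpf2zero t
      have h2 := hEF_id t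
      have h3 := hAnn t
      have h4 := hBnn t
      have h5 := hDnn t
      have h6 := hphinn t
      simp only [hpf2] at h1
      linarith [hzero]
    -- pointwise vanishing of VV
    have hV0 : ∀ t θ, θ ∈ Set.Icc 0 (2 * π) → VV u t θ = 0 := by
      intro t θ hθ
      by_contra hne
      have hpos4 : 0 < ∫ θ in (0:ℝ)..(2 * π), (VV u t θ) ^ 4 := by
        apply intervalIntegral.integral_pos Real.two_pi_pos
        · exact ((cVV hreg hcont t).pow 4).continuousOn
        · intro x _; positivity
        · exact ⟨θ, hθ, by positivity⟩
      have := hDF0 t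
      unfold DF at this
      linarith
    -- conclude
    intro x
    by_cases hx : x = 0
    · rw [hx]; exact h0
    · set z : ℂ := Complex.mk x.1 x.2 with hz
      have hzne : z ≠ 0 := by
        intro h
        apply hx
        have h1 : z.re = 0 := by rw [h]; rfl
        have h2 : z.im = 0 := by rw [h]; rfl
        exact Prod.ext h1 h2
      have habs : 0 < ‖z‖ := norm_pos_iff.mpr hzne
      set t : ℝ := Real.log (‖z‖) with hts
      have hexp : Real.exp t = ‖z‖ := Real.exp_log habs
      have hcosa : Real.cos (Complex.arg z) = x.1 / ‖z‖ := by
        rw [Complex.cos_arg hzne]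
      have hsina : Real.sin (Complex.arg z) = x.2 / ‖z‖ := by
        rw [Complex.sin_arg]
      have hPhi : Phi t (Complex.arg z) = x := by
        simp only [Phi, hexp, hcosa, hsina]
        have hne : ‖z‖ ≠ 0 := ne_of_gt habs
        apply Prod.ext
        · show ‖z‖ * (x.1 / ‖z‖) = x.1
          field_simp
        · show ‖z‖ * (x.2 / ‖z‖) = x.2
          field_simp
      rcases le_or_gt 0 (Complex.arg z) with harg | harg
      · have hmem : Complex.arg z ∈ Set.Icc 0 (2 * π) := by
          constructor
          · exact harg
          · linarith [Complex.arg_le_pi z, Real.pi_pos]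
        have := hV0 t (Complex.arg z) hmem
        unfold VV at this
        rw [hPhi] at this
        exact this
      · have hmem : Complex.arg z + 2 * π ∈ Set.Icc 0 (2 * π) := by
          constructor
          · linarith [Complex.neg_pi_lt_arg z, Real.pi_pos]
          · linarith
        have := hV0 t (Complex.arg z + 2 * π) hmem
        unfold VV at this
        rw [Phi_per, hPhi] at this
        exact this
  · -- E0 > 0 : near -∞, pf2 ≥ 3 E0 > 0
    exfalso
    set ε : ℝ := Real.sqrt (E0 / (16 * π)) with hεdef
    have hεpos : 0 < ε := Real.sqrt_pos.mpr (by positivity)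
    obtain ⟨T, hT⟩ := hdecay ε hεpos
    apply no_bounded_strongly_convex (φ := phiF u) (φ' := pF1 u) (φ'' := pf2)
      (T := T) (c := 3 * E0) (M := 2 * π * C ^ 2) hphi' hphi''
      (by linarith) (fun t ht => ?_) hphiub
    have hφsmall : phiF u t ≤ E0 / 8 := by
      have h1 := hphile ε t hεpos.le (hT t ht)
      have h2 : ε ^ 2 = E0 / (16 * π) := Real.sq_sqrt (by positivity)
      rw [h2] at h1
      have hπ := Real.pi_pos
      calc phiF u t ≤ 2 * π * (E0 / (16 * π)) := h1
        _ = E0 / 8 := by field_simp; ring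
    have h1 := hEF_id t
    have h2 := hBnn t
    have h3 := hDnn t
    -- pf2 t = 4 E0 + 4 B - 8 φ + 6 D ≥ 4 E0 - 8 (E0/8) = 3 E0
    simp only [hpf2]
    linarith
end
end
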